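/- arXiv:1606.08279 — 10 statements merged into one kernel-verified Lean document; each statement's English description precedes it below -/
import Mathlib

section
/- Let A --u--> B --f--> C₁ ⊕ C₂ --g--> A[1] be a distinguished triangle in D such that the composite of f with the projection C₁ ⊕ C₂ → C₂ is zero. Then C₂ is a direct summand of A[1] (i.e., there exist morphisms i : C₂ → A[1] and r : A[1] → C₂ with r ∘ i = id). In particular, if every morphism C₂ → A[1] is zero, then C₂ is a zero object. -/
open CategoryTheory CategoryTheory.Limits CategoryTheory.Pretriangulated

universe v u

variable (C : Type u) [Category.{v} C] [Preadditive C] [HasZeroObject C]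
  [HasShift C ℤ] [∀ n : ℤ, (shiftFunctor C n).Additive] [Pretriangulated C]
  [HasFiniteBiproducts C]

/-- An object is indecomposable if it is nonzero and any biproduct decomposition is trivial. -/
def Indec (X : C) : Prop :=
  ¬ IsZero X ∧ ∀ (A B : C), (X ≅ A ⊞ B) → IsZero A ∨ IsZero B

/-- There is a path from `X` to `Y`: a sequence of indecomposables where each consecutive
pair admits a nonzero morphism, or the next one is the shift of the previous one. -/
def HasPath (X Y : C) : Prop :=
  ∃ (n : ℕ) (f : Fin (n + 1) → C), f 0 = X ∧ f (Fin.last n) = Y ∧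
    (∀ i, Indec C (f i)) ∧
    ∀ i : Fin n, (∃ g : f i.castSucc ⟶ f i.succ, g ≠ 0) ∨
      Nonempty (f i.succ ≅ (f i.castSucc)⟦(1 : ℤ)⟧)

/-- Two indecomposables are connected by a sequence of paths and inverse paths. -/
def PathConn (X Y : C) : Prop :=
  ∃ (n : ℕ) (f : Fin (n + 1) → C), f 0 = X ∧ f (Fin.last n) = Y ∧
    (∀ i, Indec C (f i)) ∧
    ∀ i : Fin n, (∃ g : f i.castSucc ⟶ f i.succ, g ≠ 0) ∨
      (∃ g : f i.succ ⟶ f i.castSucc, g ≠ 0) ∨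
      ∃ s : ℤ, Nonempty (f i.succ ≅ (f i.castSucc)⟦s⟧)

/-- Every object is a finite direct sum of indecomposable objects. -/
def EveryObjectDecomposes : Prop :=
  ∀ X : C, ∃ (n : ℕ) (f : Fin n → C), (∀ i, Indec C (f i)) ∧ Nonempty (X ≅ ⨁ f)

/-- `D` is a block: nonzero, Krull-Schmidt-type decomposition, and path-connected. -/
def IsBlock : Prop :=
  (∃ X : C, ¬ IsZero X) ∧ EveryObjectDecomposes C ∧
    ∀ X Y : C, Indec C X → Indec C Y → PathConn C X Y

/-- `add S`: objects isomorphic to finite direct sums of objects of `S`. -/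
def addClosure (S : Set C) : Set C :=
  {X | ∃ (n : ℕ) (f : Fin n → C), (∀ i, f i ∈ S) ∧ Nonempty (X ≅ ⨁ f)}

/-- A `t`-structure `(D^{≤0}, D^{≥0})` on `C`. -/
structure TStruct where
  le : Set C
  ge : Set C
  le_iso : ∀ ⦃X Y : C⦄, (X ≅ Y) → X ∈ le → Y ∈ le
  ge_iso : ∀ ⦃X Y : C⦄, (X ≅ Y) → X ∈ ge → Y ∈ ge
  hom_zero : ∀ ⦃X Y : C⦄, X ∈ le → Y ∈ ge → ∀ f : X ⟶ Y⟦(-1 : ℤ)⟧, f = 0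
  le_shift : ∀ ⦃X : C⦄, X ∈ le → X⟦(1 : ℤ)⟧ ∈ le
  ge_shift : ∀ ⦃X : C⦄, X ∈ ge → X⟦(-1 : ℤ)⟧ ∈ ge
  exists_triangle : ∀ X : C, ∃ (A B : C) (f : A ⟶ X) (g : X ⟶ B⟦(-1 : ℤ)⟧)
      (h : B⟦(-1 : ℤ)⟧ ⟶ A⟦(1 : ℤ)⟧),
      (Triangle.mk f g h ∈ distTriang C) ∧ A ∈ le ∧ B ∈ ge

variable {C}

/-- The heart of a t-structure. -/
def TStruct.heart (t : TStruct C) : Set C := t.le ∩ t.ge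

/-- A t-structure is bounded if every object lies in `D^{≤n} ∩ D^{≥m}` for some `m ≤ n`,
where `X ∈ D^{≤n} := D^{≤0}[-n]` iff `X⟦n⟧ ∈ D^{≤0}`, and similarly for `D^{≥m}`. -/
def TStruct.Bounded (t : TStruct C) : Prop :=
  ∀ X : C, ∃ m n : ℤ, m ≤ n ∧ X⟦n⟧ ∈ t.le ∧ X⟦m⟧ ∈ t.ge

/-- A bounded t-structure is hereditary if `Hom(X, Y⟦n⟧) = 0` for all `X`, `Y` in the heart
and `n ≥ 2`. -/
def TStruct.Hereditary (t : TStruct C) : Prop :=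
  t.Bounded ∧ ∀ ⦃X Y : C⦄, X ∈ t.heart → Y ∈ t.heart →
    ∀ n : ℤ, 2 ≤ n → ∀ f : X ⟶ Y⟦n⟧, f = 0

variable (C)

/-- In a distinguished triangle `A ⟶ B ⟶ C₁ ⊞ C₂ ⟶ A⟦1⟧` where the component
`B ⟶ C₂` vanishes, `C₂` is a direct summand of `A⟦1⟧`; in particular if every morphism
`C₂ ⟶ A⟦1⟧` is zero then `C₂` is a zero object. -/
theorem stmt_0 (A B C₁ C₂ : C) (u : A ⟶ B) (f : B ⟶ C₁ ⊞ C₂) (g : C₁ ⊞ C₂ ⟶ A⟦(1 : ℤ)⟧)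
    (hT : Triangle.mk u f g ∈ distTriang C) (hf : f ≫ biprod.snd = 0) :
    (∃ (i : C₂ ⟶ A⟦(1 : ℤ)⟧) (r : A⟦(1 : ℤ)⟧ ⟶ C₂), i ≫ r = 𝟙 C₂) ∧
      ((∀ i : C₂ ⟶ A⟦(1 : ℤ)⟧, i = 0) → IsZero C₂) := by
  obtain ⟨r, hr⟩ : ∃ r : A⟦(1 : ℤ)⟧ ⟶ C₂, (biprod.snd : C₁ ⊞ C₂ ⟶ C₂) = g ≫ r :=
    Triangle.yoneda_exact₃ _ hT (biprod.snd : C₁ ⊞ C₂ ⟶ C₂) hf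
  have hr' : (biprod.snd : C₁ ⊞ C₂ ⟶ C₂) = g ≫ r := hr
  have key : (biprod.inr ≫ g : C₂ ⟶ A⟦(1 : ℤ)⟧) ≫ r = 𝟙 C₂ := by
    rw [Category.assoc, ← hr']; simp
  refine ⟨⟨biprod.inr ≫ g, r, key⟩, fun h => ?_⟩
  have : 𝟙 C₂ = 0 := by rw [← key, h (biprod.inr ≫ g), zero_comp]
  exact IsZero.of_iso (isZero_zero C) (by
    exact { hom := 0, inv := 0, hom_inv_id := by rw [this, comp_zero], inv_hom_id := by simp })
end

section
/- Let A --u--> B --f--> C₁ ⊕ C₂ --g--> A[1] be a distinguished triangle in D such that the composite of f with the projection C₁ ⊕ C₂ → C₂ is zero. If A is indecomposable and C₂ is not a zero object, then u = 0. -/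
open CategoryTheory CategoryTheory.Limits CategoryTheory.Pretriangulated

universe v u

variable (C : Type u) [Category.{v} C] [Preadditive C] [HasZeroObject C]
  [HasShift C ℤ] [∀ n : ℤ, (shiftFunctor C n).Additive] [Pretriangulated C]
  [HasFiniteBiproducts C]

variable {C}

variable (C)

/-- In a distinguished triangle `A ⟶ B ⟶ C₁ ⊞ C₂ ⟶ A⟦1⟧` where the component
`B ⟶ C₂` vanishes, if `A` is indecomposable and `C₂` is not a zero object, then `u = 0`. -/
theorem stmt_1 (A B C₁ C₂ : C) (u : A ⟶ B) (f : B ⟶ C₁ ⊞ C₂) (g : C₁ ⊞ C₂ ⟶ A⟦(1 : ℤ)⟧)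
    (hT : Triangle.mk u f g ∈ distTriang C) (hf : f ≫ biprod.snd = 0)
    (hA : Indec C A) (hC₂ : ¬ IsZero C₂) :
    u = 0 := by
  -- factor `biprod.snd` through `g`
  obtain ⟨k, hk⟩ : ∃ k : A⟦(1 : ℤ)⟧ ⟶ C₂, (biprod.snd : C₁ ⊞ C₂ ⟶ C₂) = g ≫ k :=
    Triangle.yoneda_exact₃ (Triangle.mk u f g) hT (biprod.snd : C₁ ⊞ C₂ ⟶ C₂) hf
  set i : C₂ ⟶ A⟦(1 : ℤ)⟧ := biprod.inr ≫ g with hi_def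
  have hik : i ≫ k = 𝟙 C₂ := by
    rw [hi_def, Category.assoc, ← hk]; simp
  -- complete `i` to a distinguished triangle
  obtain ⟨Z, p, q, hT2⟩ := Pretriangulated.distinguished_cocone_triangle i
  have hip : i ≫ p = 0 := comp_distTriang_mor_zero₁₂ _ hT2
  have hq : q = 0 := by
    have h1 : q ≫ i⟦(1 : ℤ)⟧' = 0 := comp_distTriang_mor_zero₃₁ _ hT2
    have h2 := h1 =≫ k⟦(1 : ℤ)⟧'
    rw [zero_comp, Category.assoc, ← Functor.map_comp, hik] at h2
    simpa using h2
  obtain ⟨s, hs⟩ : ∃ s : Z ⟶ A⟦(1 : ℤ)⟧, 𝟙 Z = s ≫ p :=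
    Triangle.coyoneda_exact₃ (Triangle.mk i p q) hT2 (𝟙 Z) (by rw [hq]; exact comp_zero)
  set s' : Z ⟶ A⟦(1 : ℤ)⟧ := s ≫ (𝟙 _ - k ≫ i) with hs'_def
  have hs'k : s' ≫ k = 0 := by
    simp only [hs'_def, Category.assoc, Preadditive.sub_comp, Preadditive.comp_sub,
      Category.id_comp, Category.comp_id, Category.assoc, hik]
    simp
  have hs'p : s' ≫ p = 𝟙 Z := by
    simp only [hs'_def, Category.assoc, Preadditive.sub_comp, Preadditive.comp_sub,
      Category.id_comp, Category.comp_id, Category.assoc, hip, comp_zero]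
    rw [sub_zero, ← hs]
  -- `A⟦1⟧ ≅ C₂ ⊞ Z`
  have hαβ : biprod.lift k p ≫ biprod.desc i s' = 𝟙 (A⟦(1 : ℤ)⟧) := by
    rw [biprod.lift_desc]
    have hm : (𝟙 (A⟦(1 : ℤ)⟧) - (k ≫ i + p ≫ s')) ≫ p = 0 := by
      simp only [Preadditive.sub_comp, Preadditive.add_comp, Category.id_comp,
        Category.assoc, hip, hs'p, comp_zero, Category.comp_id, zero_add]
      abel
    obtain ⟨m', hm'⟩ : ∃ m' : A⟦(1 : ℤ)⟧ ⟶ C₂, 𝟙 (A⟦(1 : ℤ)⟧) - (k ≫ i + p ≫ s') = m' ≫ i :=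
      Triangle.coyoneda_exact₂ (Triangle.mk i p q) hT2 _ hm
    have h3 := hm' =≫ k
    simp only [Preadditive.sub_comp, Preadditive.add_comp, Category.id_comp,
      Category.assoc, hik, hs'k, Category.comp_id, comp_zero, add_zero,
      sub_self] at h3
    rw [← h3, zero_comp] at hm'
    exact (sub_eq_zero.mp hm').symm
  have hβα : biprod.desc i s' ≫ biprod.lift k p = 𝟙 (C₂ ⊞ Z) := by
    ext <;> simp [hik, hip, hs'k, hs'p]
  have hiso : A⟦(1 : ℤ)⟧ ≅ C₂ ⊞ Z := ⟨biprod.lift k p, biprod.desc i s', hαβ, hβα⟩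
  -- transport through the inverse shift
  haveI : PreservesBinaryBiproducts (shiftFunctor C (-1 : ℤ)) :=
    preservesBinaryBiproducts_of_preservesBiproducts _
  have hA1 : A ≅ (C₂⟦(-1 : ℤ)⟧) ⊞ (Z⟦(-1 : ℤ)⟧) :=
    (shiftFunctorCompIsoId C (1 : ℤ) (-1 : ℤ) (by ring)).symm.app A ≪≫
      (shiftFunctor C (-1 : ℤ)).mapIso hiso ≪≫
      (shiftFunctor C (-1 : ℤ)).mapBiprod C₂ Z
  have hZ : IsZero Z := by
    rcases hA.2 _ _ hA1 with h | h
    · exact absurd (IsZero.of_iso ((shiftFunctor C (1 : ℤ)).map_isZero h)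
        ((shiftFunctorCompIsoId C (-1 : ℤ) (1 : ℤ) (by ring)).symm.app C₂)) hC₂
    · exact IsZero.of_iso ((shiftFunctor C (1 : ℤ)).map_isZero h)
        ((shiftFunctorCompIsoId C (-1 : ℤ) (1 : ℤ) (by ring)).symm.app Z)
  -- hence `i` is an isomorphism and `g` is split epi
  have : IsIso i := ((Triangle.mk i p q).isZero₃_iff_isIso₁ hT2).1 hZ
  have hgu : g ≫ u⟦(1 : ℤ)⟧' = 0 := comp_distTriang_mor_zero₃₁ _ hT
  have hu1 : u⟦(1 : ℤ)⟧' = 0 := by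
    have h4 : (inv i ≫ biprod.inr) ≫ g ≫ u⟦(1 : ℤ)⟧' = u⟦(1 : ℤ)⟧' := by
      rw [Category.assoc, ← Category.assoc biprod.inr, ← hi_def,
        ← Category.assoc, IsIso.inv_hom_id, Category.id_comp]
    rw [hgu, comp_zero] at h4
    exact h4.symm
  exact (shiftFunctor C (1 : ℤ)).map_injective (by rw [hu1, Functor.map_zero])
end

section
/- Let A --u--> B --f--> C₁ ⊕ C₂ --g--> A[1] be a distinguished triangle in D such that the composite of f with the projection C₁ ⊕ C₂ → C₂ is zero. If every morphism C₁ → A[1] is zero and every morphism B → A is zero, then u = 0. -/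
open CategoryTheory CategoryTheory.Limits CategoryTheory.Pretriangulated

universe v u

variable (C : Type u) [Category.{v} C] [Preadditive C] [HasZeroObject C]
  [HasShift C ℤ] [∀ n : ℤ, (shiftFunctor C n).Additive] [Pretriangulated C]
  [HasFiniteBiproducts C]

variable {C}

variable (C)

/-- In a distinguished triangle `A ⟶ B ⟶ C₁ ⊞ C₂ ⟶ A⟦1⟧` where the component
`B ⟶ C₂` vanishes, if `Hom(C₁, A⟦1⟧) = 0` and `Hom(B, A) = 0`, then `u = 0`. -/
theorem stmt_2 (A B C₁ C₂ : C) (u : A ⟶ B) (f : B ⟶ C₁ ⊞ C₂) (g : C₁ ⊞ C₂ ⟶ A⟦(1 : ℤ)⟧)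
    (hT : Triangle.mk u f g ∈ distTriang C) (hf : f ≫ biprod.snd = 0)
    (h₁ : ∀ h : C₁ ⟶ A⟦(1 : ℤ)⟧, h = 0) (h₂ : ∀ h : B ⟶ A, h = 0) :
    u = 0 := by
  obtain ⟨s, hs⟩ := Triangle.coyoneda_exact₃ _ hT (biprod.inl : C₁ ⟶ C₁ ⊞ C₂) (h₁ _)
  change C₁ ⟶ B at s
  change (biprod.inl : C₁ ⟶ C₁ ⊞ C₂) = s ≫ f at hs
  have hfe : f ≫ biprod.fst ≫ biprod.inl = f := by
    have := biprod.total (X := C₁) (Y := C₂)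
    calc f ≫ biprod.fst ≫ biprod.inl
        = f ≫ (biprod.fst ≫ biprod.inl + biprod.snd ≫ biprod.inr) := by
          rw [Preadditive.comp_add]
          simp [reassoc_of% hf]
      _ = f := by rw [this, Category.comp_id]
  have hφ : (𝟙 B - f ≫ biprod.fst ≫ s) ≫ f = 0 := by
    rw [Preadditive.sub_comp, Category.id_comp]
    simp only [Category.assoc, ← hs]
    rw [hfe, sub_self]
  obtain ⟨t, ht⟩ := Triangle.coyoneda_exact₂ _ hT _ hφ
  change B ⟶ A at t
  change 𝟙 B - f ≫ biprod.fst ≫ s = t ≫ u at ht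
  rw [h₂ t, zero_comp] at ht
  have hid : 𝟙 B = f ≫ biprod.fst ≫ s := sub_eq_zero.mp ht
  have huf : u ≫ f = 0 := comp_distTriang_mor_zero₁₂ _ hT
  calc u = u ≫ 𝟙 B := (Category.comp_id u).symm
    _ = u ≫ f ≫ biprod.fst ≫ s := by rw [hid]
    _ = 0 := by rw [← Category.assoc, huf, zero_comp]
end

section
/- Let (D^{≤0}, D^{≥0}) be a bounded hereditary t-structure on D with heart A. Then the abelian category A is hereditary: for all objects X, Y of A, the Ext group Ext²_A(X, Y) vanishes (equivalently, the functor Ext¹_A(Z, −) is right exact for every object Z of A). -/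
open CategoryTheory CategoryTheory.Limits CategoryTheory.Pretriangulated

universe v u

variable (C : Type u) [Category.{v} C] [Preadditive C] [HasZeroObject C]
  [HasShift C ℤ] [∀ n : ℤ, (shiftFunctor C n).Additive] [Pretriangulated C]
  [HasFiniteBiproducts C]

variable {C}

variable (C)

/-- the heart of a bounded hereditary t-structure is a hereditary abelian
category, i.e. `Ext²` vanishes, equivalently the functor `Ext¹(Z, -)` is right exact for
every `Z` in the heart. Via the isomorphism `Ext¹_𝒜(Z, X) ≅ Hom_D(Z, X⟦1⟧)` of BBD, and
since epimorphisms `g : Y ⟶ W` in the heart are exactly the morphisms fitting into a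
distinguished triangle `X ⟶ Y ⟶ W ⟶ X⟦1⟧` with all three terms in the heart, this
right exactness says: for any such triangle and any `ω : Z ⟶ W⟦1⟧` there is
`η : Z ⟶ Y⟦1⟧` with `η ≫ g⟦1⟧ = ω`. -/
theorem stmt_3 (t : TStruct C) (ht : t.Hereditary) :
    ∀ Z ∈ t.heart, ∀ (X Y W : C) (a : X ⟶ Y) (g : Y ⟶ W) (c : W ⟶ X⟦(1 : ℤ)⟧),
      X ∈ t.heart → Y ∈ t.heart → W ∈ t.heart →
      (Triangle.mk a g c ∈ distTriang C) →
      ∀ ω : Z ⟶ W⟦(1 : ℤ)⟧, ∃ η : Z ⟶ Y⟦(1 : ℤ)⟧,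
        η ≫ (shiftFunctor C (1 : ℤ)).map g = ω := by
  intro Z hZ X Y W a g c hX hY hW hT ω
  have hT1 := Triangle.shift_distinguished _ hT (1 : ℤ)
  have hzero : ω ≫ (shiftFunctor C (1 : ℤ)).map c = 0 := by
    have e := (shiftFunctorAdd' C (1 : ℤ) 1 2 rfl).app X
    have h2 : (ω ≫ (shiftFunctor C (1 : ℤ)).map c) ≫ e.inv = 0 :=
      ht.2 hZ hX 2 le_rfl _
    have := congrArg (fun u => u ≫ e.hom) h2
    simpa using this
  obtain ⟨h, hh⟩ := Triangle.coyoneda_exact₃ _ hT1 ω (by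
    dsimp [Triangle.shiftFunctor, Triangle.mk]
    rw [Linear.comp_units_smul, reassoc_of% hzero, zero_comp, smul_zero]; rfl)
  refine ⟨(1 : ℤ).negOnePow • h, ?_⟩
  rw [hh]
  dsimp [Triangle.shiftFunctor, Triangle.mk]
  exact (Linear.units_smul_comp ..).trans (Linear.comp_units_smul ..).symm
end

section
/- Let (D^{≤0}, D^{≥0}) be a bounded hereditary t-structure on D with heart A. Then every object X of D is isomorphic to a finite direct sum ⊕_{p ∈ ℤ} A_p[-p], where each A_p is an object of the heart A and all but finitely many A_p are zero (one may take A_p = H^p(X), the p-th cohomology of X with respect to the t-structure). -/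
open CategoryTheory CategoryTheory.Limits CategoryTheory.Pretriangulated

universe v u

variable (C : Type u) [Category.{v} C] [Preadditive C] [HasZeroObject C]
  [HasShift C ℤ] [∀ n : ℤ, (shiftFunctor C n).Additive] [Pretriangulated C]
  [HasFiniteBiproducts C]

variable {C}

set_option linter.unusedSectionVars false

noncomputable def shc (X : C) (a b c : ℤ) (h : a + b = c) : (X⟦a⟧)⟦b⟧ ≅ X⟦c⟧ :=
  ((shiftFunctorAdd' C a b c h).app X).symm

lemma TStruct.le_shift_nat (t : TStruct (C := C)) {X : C} (a : ℤ) (hX : X⟦a⟧ ∈ t.le) (k : ℕ) :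
    X⟦a + (k : ℤ)⟧ ∈ t.le := by
  induction k with
  | zero => simpa using hX
  | succ k ih =>
    exact t.le_iso (shc X (a + k) 1 (a + (k + 1 : ℕ)) (by push_cast; ring)) (t.le_shift ih)

lemma TStruct.ge_shift_nat (t : TStruct (C := C)) {X : C} (a : ℤ) (hX : X⟦a⟧ ∈ t.ge) (k : ℕ) :
    X⟦a - (k : ℤ)⟧ ∈ t.ge := by
  induction k with
  | zero => simpa using hX
  | succ k ih =>
    exact t.ge_iso (shc X (a - k) (-1) (a - (k + 1 : ℕ)) (by push_cast; ring)) (t.ge_shift ih)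

lemma TStruct.le_mono (t : TStruct (C := C)) {X : C} {a b : ℤ} (h : a ≤ b)
    (hX : X⟦a⟧ ∈ t.le) : X⟦b⟧ ∈ t.le := by
  have := t.le_shift_nat a hX (b - a).toNat
  rwa [show a + ((b - a).toNat : ℤ) = b by omega] at this

lemma TStruct.ge_mono (t : TStruct (C := C)) {X : C} {a b : ℤ} (h : b ≤ a)
    (hX : X⟦a⟧ ∈ t.ge) : X⟦b⟧ ∈ t.ge := by
  have := t.ge_shift_nat a hX (a - b).toNat
  rwa [show a - ((a - b).toNat : ℤ) = b by omega] at this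

lemma TStruct.mem_le_zero (t : TStruct (C := C)) {X : C} (hX : X ∈ t.le) : X⟦(0:ℤ)⟧ ∈ t.le :=
  t.le_iso ((shiftFunctorZero C ℤ).app X).symm hX

lemma TStruct.mem_ge_zero (t : TStruct (C := C)) {X : C} (hX : X ∈ t.ge) : X⟦(0:ℤ)⟧ ∈ t.ge :=
  t.ge_iso ((shiftFunctorZero C ℤ).app X).symm hX

lemma TStruct.hom_zero' (t : TStruct (C := C)) {X Y : C} (hX : X ∈ t.le) (hY : Y ∈ t.ge)
    {d : ℤ} (hd : d ≤ -1) (f : X ⟶ Y⟦d⟧) : f = 0 := by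
  have h1 : Y⟦d + 1⟧ ∈ t.ge := t.ge_mono (by omega) (t.mem_ge_zero hY)
  have h2 : f ≫ (shc Y (d + 1) (-1) d (by ring)).inv = 0 := t.hom_zero hX h1 _
  calc f = (f ≫ (shc Y (d + 1) (-1) d (by ring)).inv) ≫ (shc Y (d + 1) (-1) d (by ring)).hom := by
        simp
    _ = 0 := by rw [h2, zero_comp]

set_option linter.unusedSectionVars false

lemma TStruct.ge_char (t : TStruct (C := C)) {Z : C}
    (h : ∀ (A : C), A ∈ t.le → ∀ f : A ⟶ Z, f = 0) : Z⟦(1:ℤ)⟧ ∈ t.ge := by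
  obtain ⟨A, B, f, g, w, hT, hA, hB⟩ := t.exists_triangle Z
  have hf : f = 0 := h A hA f
  obtain ⟨s, hs⟩ := Triangle.coyoneda_exact₁ _ hT (𝟙 (A⟦(1:ℤ)⟧)) (by
    dsimp [Triangle.mk]; rw [hf]; simp; rfl)
  have hs0 : s = 0 := t.hom_zero (t.le_shift hA) hB s
  have hid : 𝟙 (A⟦(1:ℤ)⟧) = 0 := by rw [hs, hs0, zero_comp]; rfl
  have hAz : IsZero A := by
    rw [IsZero.iff_id_eq_zero]
    have : (shiftFunctor C (1:ℤ)).map (𝟙 A) = 0 := by rw [CategoryTheory.Functor.map_id]; exact hid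
    exact ((shiftFunctor C (1:ℤ)).map_eq_zero_iff).mp this
  have : IsIso g := (Triangle.isZero₁_iff_isIso₂ _ hT).mp hAz
  exact t.ge_iso
    (((shiftFunctor C (1:ℤ)).mapIso (asIso g) ≪≫ shc B (-1) 1 0 (by ring) ≪≫
      (shiftFunctorZero C ℤ).app B).symm) hB

lemma TStruct.le_char (t : TStruct (C := C)) {Z : C}
    (h : ∀ (B : C), B ∈ t.ge → ∀ f : Z ⟶ B⟦(-1:ℤ)⟧, f = 0) : Z ∈ t.le := by
  obtain ⟨A, B, f, g, w, hT, hA, hB⟩ := t.exists_triangle Z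
  have hg : g = 0 := h B hB g
  obtain ⟨s, hs⟩ := Triangle.yoneda_exact₃ _ hT (𝟙 (B⟦(-1:ℤ)⟧)) (by
    dsimp [Triangle.mk]; rw [hg]; simp; rfl)
  have hs0 : s = 0 := t.hom_zero (t.le_shift hA) hB s
  have hid : 𝟙 (B⟦(-1:ℤ)⟧) = 0 := by rw [hs, hs0, comp_zero]; rfl
  have hBz : IsZero (B⟦(-1:ℤ)⟧ : C) := IsZero.of_iso (isZero_zero C) ?_
  · have : IsIso f := (Triangle.isZero₃_iff_isIso₁ _ hT).mp hBz
    exact t.le_iso (asIso f) hA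
  · exact { hom := 0, inv := 0, hom_inv_id := by rw [hid]; simp, inv_hom_id := by simp }

lemma TStruct.le_ext (t : TStruct (C := C)) (T : Triangle C) (hT : T ∈ distTriang C)
    (h₁ : T.obj₁ ∈ t.le) (h₃ : T.obj₃ ∈ t.le) : T.obj₂ ∈ t.le := by
  apply t.le_char
  intro B hB f
  obtain ⟨g, hg⟩ := Triangle.yoneda_exact₂ _ hT f (t.hom_zero h₁ hB _)
  rw [hg, t.hom_zero h₃ hB g, comp_zero]


lemma TStruct.hom_zero_ge1 (t : TStruct (C := C)) {A Y : C} (hA : A ∈ t.le)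
    (hY : Y⟦(1:ℤ)⟧ ∈ t.ge) (u : A ⟶ Y) : u = 0 := by
  have e : ((Y⟦(1:ℤ)⟧)⟦(-1:ℤ)⟧ : C) ≅ Y := shc Y 1 (-1) 0 (by ring) ≪≫ (shiftFunctorZero C ℤ).app Y
  have h0 : u ≫ e.inv = 0 := t.hom_zero hA hY _
  calc u = (u ≫ e.inv) ≫ e.hom := by simp
    _ = 0 := by rw [h0, zero_comp]

lemma TStruct.ge_ext (t : TStruct (C := C)) (T : Triangle C) (hT : T ∈ distTriang C)
    (h₁ : T.obj₁⟦(1:ℤ)⟧ ∈ t.ge) (h₃ : T.obj₃⟦(1:ℤ)⟧ ∈ t.ge) : T.obj₂⟦(1:ℤ)⟧ ∈ t.ge := by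
  apply t.ge_char
  intro A hA f
  obtain ⟨g, hg⟩ := Triangle.coyoneda_exact₂ _ hT f (t.hom_zero_ge1 hA h₃ _)
  rw [hg, t.hom_zero_ge1 hA h₁ g, zero_comp]

noncomputable def biproductFinOne (f : Fin 1 → C) : (⨁ f) ≅ f 0 where
  hom := biproduct.π f 0
  inv := biproduct.lift (fun i => eqToHom (by rw [Fin.fin_one_eq_zero i]))
  hom_inv_id := by
    ext j
    have hj : j = 0 := Fin.fin_one_eq_zero j
    subst hj
    simp
  inv_hom_id := by simp

def snocFam {α : Type*} {n : ℕ} (f : Fin n → α) (Z : α) : Fin (n + 1) → α := Fin.snoc f Z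

@[simp] lemma snocFam_castSucc {α : Type*} {n : ℕ} (f : Fin n → α) (Z : α) (i : Fin n) :
    snocFam f Z i.castSucc = f i := by simp [snocFam]

@[simp] lemma snocFam_last {α : Type*} {n : ℕ} (f : Fin n → α) (Z : α) :
    snocFam f Z (Fin.last n) = Z := by simp [snocFam]

noncomputable def biproductSnocIso {n : ℕ} (f : Fin n → C) (Z : C) :
    ((⨁ f) ⊞ Z) ≅ ⨁ (snocFam f Z) where
  hom := biprod.desc
    (biproduct.desc fun i => eqToHom (snocFam_castSucc f Z i).symm ≫
      biproduct.ι (snocFam f Z) i.castSucc)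
    (eqToHom (snocFam_last f Z).symm ≫ biproduct.ι (snocFam f Z) (Fin.last n))
  inv := biproduct.desc fun j => Fin.lastCases
    (eqToHom (snocFam_last f Z) ≫ biprod.inr)
    (fun i => eqToHom (snocFam_castSucc f Z i) ≫ biproduct.ι f i ≫ biprod.inl) j
  hom_inv_id := by
    apply biprod.hom_ext'
    · apply biproduct.hom_ext'
      intro i
      simp
    · simp
  inv_hom_id := by
    apply biproduct.hom_ext'
    intro j
    induction j using Fin.lastCases with
    | last => simp
    | cast i => simp

lemma main_lemma (t : TStruct (C := C))
    (hHer : ∀ ⦃X Y : C⦄, X ∈ t.heart → Y ∈ t.heart → ∀ n : ℤ, 2 ≤ n → ∀ f : X ⟶ Y⟦n⟧, f = 0)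
    (k : ℕ) :
    ∀ (X : C) (n : ℤ), X⟦n⟧ ∈ t.le → X⟦n - (k : ℤ)⟧ ∈ t.ge →
    ∃ (m : ℕ) (p : Fin m → ℤ) (A : Fin m → C), (∀ i, A i ∈ t.heart) ∧ (∀ i, p i ≤ n) ∧
      Nonempty (X ≅ ⨁ fun i => (A i)⟦-(p i)⟧) := by
  induction k with
  | zero =>
    intro X n hle hge
    refine ⟨1, fun _ => n, fun _ => X⟦n⟧, fun i => ⟨hle, by simpa using hge⟩,
      fun i => le_refl n, ⟨?_⟩⟩
    exact (shc X n (-n) 0 (by ring) ≪≫ (shiftFunctorZero C ℤ).app X).symm ≪≫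
      (biproductFinOne (fun _ : Fin 1 => (X⟦n⟧)⟦-n⟧)).symm
  | succ k ih =>
    intro X n hle hge
    have hge' : X⟦n - ((k : ℤ) + 1)⟧ ∈ t.ge := by
      have h : n - (((k + 1 : ℕ)) : ℤ) = n - ((k : ℤ) + 1) := by push_cast; ring
      rwa [h] at hge
    obtain ⟨A, B, f, g, w, hT, hA, hB⟩ := t.exists_triangle (X⟦n - 1⟧)
    -- (a) B ∈ t.le
    have hBle : B ∈ t.le := by
      have hdist := Triangle.shift_distinguished _ (rot_of_distTriang _ hT) 1
      rw [Triangle.shiftFunctor_eq] at hdist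
      have h1 : (((Triangle.shiftFunctor C 1).obj (Triangle.mk f g w).rotate).obj₁) ∈ t.le := by
        exact t.le_iso (shc X (n - 1) 1 n (by ring)).symm hle
      have h3 : (((Triangle.shiftFunctor C 1).obj (Triangle.mk f g w).rotate).obj₃) ∈ t.le := by
        exact t.le_shift (t.le_shift hA)
      have h2 := t.le_ext _ hdist h1 h3
      exact t.le_iso (shc B (-1) 1 0 (by ring) ≪≫ (shiftFunctorZero C ℤ).app B) h2
    -- (b) A⟦-k⟧ ∈ t.ge
    have hgeAk : (A⟦(-(k : ℤ))⟧ : C) ∈ t.ge := by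
      have hdist := Triangle.shift_distinguished _
        (rot_of_distTriang _ (rot_of_distTriang _ hT)) (-(k : ℤ) - 2)
      rw [Triangle.shiftFunctor_eq] at hdist
      have h1 : (((Triangle.shiftFunctor C (-(k : ℤ) - 2)).obj
          (Triangle.mk f g w).rotate.rotate).obj₁)⟦(1 : ℤ)⟧ ∈ t.ge := by
        refine t.ge_iso (Iso.symm ?_) (t.ge_mono (b := -(k : ℤ) - 2) (by omega) (t.mem_ge_zero hB))
        exact (shiftFunctor C (1 : ℤ)).mapIso
            (shc B (-1) (-(k : ℤ) - 2) (-(k : ℤ) - 3) (by ring)) ≪≫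
          shc B (-(k : ℤ) - 3) 1 (-(k : ℤ) - 2) (by ring)
      have h3 : (((Triangle.shiftFunctor C (-(k : ℤ) - 2)).obj
          (Triangle.mk f g w).rotate.rotate).obj₃)⟦(1 : ℤ)⟧ ∈ t.ge := by
        refine t.ge_iso (Iso.symm ?_) hge'
        exact (shiftFunctor C (1 : ℤ)).mapIso
            ((shiftFunctor C (-(k : ℤ) - 2)).mapIso (shc X (n - 1) 1 n (by ring)) ≪≫
              shc X n (-(k : ℤ) - 2) (n - (k : ℤ) - 2) (by ring)) ≪≫
          shc X (n - (k : ℤ) - 2) 1 (n - ((k : ℤ) + 1)) (by ring)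
      have h2 := t.ge_ext _ hdist h1 h3
      refine t.ge_iso ?_ h2
      exact (shiftFunctor C (1 : ℤ)).mapIso
          (shc A 1 (-(k : ℤ) - 2) (-(k : ℤ) - 1) (by ring)) ≪≫
        shc A (-(k : ℤ) - 1) 1 (-(k : ℤ)) (by ring)
    -- IH applied to A
    obtain ⟨m, q, As, hheart, hqle, ⟨eA⟩⟩ := ih A 0 (t.mem_le_zero hA) (by
      have h : (0 : ℤ) - (k : ℤ) = -(k : ℤ) := by ring
      rw [h]; exact hgeAk)
    -- w = 0
    have hw : w = 0 := by
      have e : (A⟦(1 : ℤ)⟧ : C) ≅ ⨁ ((shiftFunctor C (1 : ℤ)).obj ∘ fun i => (As i)⟦-(q i)⟧) :=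
        (shiftFunctor C (1 : ℤ)).mapIso eA ≪≫ (shiftFunctor C (1 : ℤ)).mapBiproduct _
      have hker : ∀ (j : Fin m) (u : (B⟦(-1 : ℤ)⟧ : C) ⟶ ((As j)⟦-(q j)⟧)⟦(1 : ℤ)⟧), u = 0 := by
        intro j u
        have e1 : ((B⟦(-1 : ℤ)⟧)⟦(1 : ℤ)⟧ : C) ≅ B :=
          shc B (-1) 1 0 (by ring) ≪≫ (shiftFunctorZero C ℤ).app B
        have e2 : (((As j)⟦-(q j)⟧⟦(1 : ℤ)⟧)⟦(1 : ℤ)⟧ : C) ≅ (As j)⟦2 - q j⟧ :=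
          (shiftFunctor C (1 : ℤ)).mapIso (shc (As j) (-(q j)) 1 (1 - q j) (by ring)) ≪≫
            shc (As j) (1 - q j) 1 (2 - q j) (by ring)
        have hher : e1.inv ≫ (shiftFunctor C (1 : ℤ)).map u ≫ e2.hom = 0 :=
          hHer ⟨hBle, hB⟩ (hheart j) (2 - q j) (by have := hqle j; omega) _
        have hmap : (shiftFunctor C (1 : ℤ)).map u = 0 := by
          have : e1.hom ≫ (e1.inv ≫ (shiftFunctor C (1 : ℤ)).map u ≫ e2.hom) ≫ e2.inv =
              (shiftFunctor C (1 : ℤ)).map u := by simp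
          rw [← this, hher]; simp
        exact ((shiftFunctor C (1 : ℤ)).map_eq_zero_iff).mp hmap
      have hcomp : w ≫ e.hom = 0 := by
        apply biproduct.hom_ext
        intro j
        rw [zero_comp, Category.assoc]
        exact hker j _
      calc w = (w ≫ e.hom) ≫ e.inv := by simp
        _ = 0 := by rw [hcomp, zero_comp]
    -- splitting
    obtain ⟨e2, -, -⟩ := exists_iso_binaryBiproduct_of_distTriang _ hT hw
    refine ⟨m + 1, snocFam (fun i => q i + (n - 1)) n, snocFam As B, ?_, ?_, ⟨?_⟩⟩
    · intro i
      induction i using Fin.lastCases with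
      | last => simpa [TStruct.heart] using (⟨hBle, hB⟩ : B ∈ t.heart)
      | cast i => simpa using hheart i
    · intro i
      induction i using Fin.lastCases with
      | last => simp
      | cast i => have := hqle i; simp; omega
    · have comp : ∀ j : Fin (m + 1),
          (shiftFunctor C (1 - n)).obj (snocFam (fun i => (As i)⟦-(q i)⟧) (B⟦(-1 : ℤ)⟧) j) ≅
          (snocFam As B j)⟦-(snocFam (fun i => q i + (n - 1)) n j)⟧ := by
        intro j
        induction j using Fin.lastCases with
        | last =>
          exact eqToIso (by rw [snocFam_last]) ≪≫ shc B (-1) (1 - n) (-n) (by ring) ≪≫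
            eqToIso (by rw [snocFam_last, snocFam_last])
        | cast i =>
          exact eqToIso (by rw [snocFam_castSucc]) ≪≫
            shc (As i) (-(q i)) (1 - n) (-(q i + (n - 1))) (by ring) ≪≫
            eqToIso (by rw [snocFam_castSucc, snocFam_castSucc])
      exact (shc X (n - 1) (1 - n) 0 (by ring) ≪≫ (shiftFunctorZero C ℤ).app X).symm ≪≫
        (shiftFunctor C (1 - n)).mapIso (e2 ≪≫ biprod.mapIso eA (Iso.refl _) ≪≫
          biproductSnocIso _ _) ≪≫
        (shiftFunctor C (1 - n)).mapBiproduct _ ≪≫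
        biproduct.mapIso comp

variable (C)

/-- for a bounded hereditary t-structure, every object is isomorphic to a finite
direct sum `⊕ A_i⟦-p_i⟧` with each `A_i` in the heart. -/
theorem stmt_4 (t : TStruct C) (ht : t.Hereditary) (X : C) :
    ∃ (n : ℕ) (p : Fin n → ℤ) (A : Fin n → C), (∀ i, A i ∈ t.heart) ∧
      Nonempty (X ≅ ⨁ fun i => (A i)⟦-(p i)⟧) := by
  obtain ⟨m0, n0, hmn, hle0, hge0⟩ := ht.1 X
  have hge' : X⟦n0 - (((n0 - m0).toNat : ℕ) : ℤ)⟧ ∈ t.ge := by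
    rwa [show n0 - (((n0 - m0).toNat : ℕ) : ℤ) = m0 by omega]
  obtain ⟨m, p, A, h1, h2, h3⟩ := main_lemma t ht.2 (n0 - m0).toNat X n0 hle0 hge'
  exact ⟨m, p, A, h1, h3⟩
end

section
/- Let A be a full additive subcategory of D (a class of objects closed under isomorphism, containing zero, and closed under finite direct sums) such that: (a) every object of D is isomorphic to a finite direct sum of objects of the form A[n] with A ∈ A and n ∈ ℤ, and (b) every morphism A → B[m] with A, B ∈ A and m < 0 is zero. Then the pair (D^{≤0}, D^{≥0}), where D^{≤0} = add(⋃_{n ≥ 0} A[n]) and D^{≥0} = add(⋃_{n ≤ 0} A[n]), is a bounded t-structure on D whose heart is A, and this t-structure is hereditary, i.e. every morphism A → B[n] with A, B ∈ A and n ≥ 2 is zero. -/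
open CategoryTheory CategoryTheory.Limits CategoryTheory.Pretriangulated

open ZeroObject

universe v u

variable (C : Type u) [Category.{v} C] [Preadditive C] [HasZeroObject C]
  [HasShift C ℤ] [∀ n : ℤ, (shiftFunctor C n).Additive] [Pretriangulated C]
  [HasFiniteBiproducts C]

variable {C}

variable (C)

set_option linter.unusedSectionVars false
set_option maxHeartbeats 800000

section Aux

variable {C : Type u} [Category.{v} C] [Preadditive C] [HasZeroObject C]
  [HasShift C ℤ] [∀ n : ℤ, (shiftFunctor C n).Additive] [Pretriangulated C]
  [HasFiniteBiproducts C]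

private lemma isZero_biproduct_fin0 (W : Fin 0 → C) : IsZero (⨁ W) := by
  rw [IsZero.iff_id_eq_zero]
  apply biproduct.hom_ext
  intro j
  exact j.elim0

private lemma hom_zero_of_components {n m : ℕ} {W : Fin n → C} {V : Fin m → C}
    {X Y : C} (eX : X ≅ ⨁ W) (eY : Y ≅ ⨁ V)
    (h : ∀ i j (g : W i ⟶ V j), g = 0) (f : X ⟶ Y) : f = 0 := by
  have h0 : eX.inv ≫ f ≫ eY.hom = 0 := by
    apply biproduct.hom_ext
    intro j
    apply biproduct.hom_ext'
    intro i
    rw [h i j (biproduct.ι W i ≫ (eX.inv ≫ f ≫ eY.hom) ≫ biproduct.π V j)]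
    simp
  calc f = eX.hom ≫ (eX.inv ≫ f ≫ eY.hom) ≫ eY.inv := by simp
    _ = 0 := by rw [h0]; simp

private lemma shift_hom_zero' {A B : C} (p q : ℤ)
    (h : ∀ g : A ⟶ B⟦q - p⟧, g = 0) (f : A⟦p⟧ ⟶ B⟦q⟧) : f = 0 := by
  apply (shiftFunctor C (-p)).map_injective
  rw [Functor.map_zero]
  have e1 : (A⟦p⟧)⟦-p⟧ ≅ A := (shiftFunctorCompIsoId C p (-p) (by ring)).app A
  have e2 : B⟦q - p⟧ ≅ (B⟦q⟧)⟦-p⟧ := (shiftFunctorAdd' C q (-p) (q - p) (by ring)).app B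
  have hg : e1.inv ≫ (shiftFunctor C (-p)).map f ≫ e2.inv = 0 := h _
  calc (shiftFunctor C (-p)).map f
      = e1.hom ≫ (e1.inv ≫ (shiftFunctor C (-p)).map f ≫ e2.inv) ≫ e2.hom := by simp
    _ = 0 := by rw [hg]; simp


private lemma biproduct_map_comp {n : ℕ} {f g h : Fin n → C} (p : ∀ i, f i ⟶ g i)
    (q : ∀ i, g i ⟶ h i) :
    biproduct.map p ≫ biproduct.map q = biproduct.map (fun i => p i ≫ q i) := by
  apply biproduct.hom_ext
  intro j
  simp [biproduct.map_π]

private lemma biproduct_map_add {n : ℕ} {f g : Fin n → C} (p q : ∀ i, f i ⟶ g i) :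
    biproduct.map p + biproduct.map q = biproduct.map (fun i => p i + q i) := by
  apply biproduct.hom_ext
  intro j
  simp [biproduct.map_π]

private lemma biproduct_map_id {n : ℕ} {f : Fin n → C} :
    biproduct.map (fun i => 𝟙 (f i)) = 𝟙 (⨁ f) := by
  apply biproduct.hom_ext
  intro j
  simp [biproduct.map_π]

private lemma biproduct_map_zero {n : ℕ} {f g : Fin n → C} :
    (biproduct.map (fun i => (0 : f i ⟶ g i))) = 0 := by
  apply biproduct.hom_ext
  intro j
  simp [biproduct.map_π]

private noncomputable def finSuccBiproductIso {n : ℕ} (W : Fin (n + 1) → C) :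
    (⨁ W) ≅ W 0 ⊞ ⨁ (fun i : Fin n => W i.succ) where
  hom := biprod.lift (biproduct.π W 0) (biproduct.lift fun j => biproduct.π W j.succ)
  inv := biprod.desc (biproduct.ι W 0) (biproduct.desc fun j => biproduct.ι W j.succ)
  hom_inv_id := by
    rw [biprod.lift_desc, biproduct.lift_desc, ← biproduct.total, Fin.sum_univ_succ]
  inv_hom_id := by
    apply biprod.hom_ext' <;> apply biprod.hom_ext
    · simp
    · apply biproduct.hom_ext
      intro j
      simp [biproduct.ι_π, (Fin.succ_ne_zero j).symm]
    · apply biproduct.hom_ext'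
      intro i
      simp [biproduct.ι_π, Fin.succ_ne_zero i]
    · apply biproduct.hom_ext'
      intro i
      apply biproduct.hom_ext
      intro j
      by_cases h : i = j
      · subst h; simp [biproduct.ι_π]
      · simp [biproduct.ι_π, Fin.succ_inj, h, fun hh => h (Fin.succ_inj.mp hh)]
  
private noncomputable def biproductBiprodIso {n : ℕ} (U V : Fin n → C) :
    (⨁ fun i => U i ⊞ V i) ≅ (⨁ U) ⊞ (⨁ V) where
  hom := biprod.lift (biproduct.map fun i => biprod.fst) (biproduct.map fun i => biprod.snd)
  inv := biprod.desc (biproduct.map fun i => biprod.inl) (biproduct.map fun i => biprod.inr)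
  hom_inv_id := by
    rw [biprod.lift_desc, biproduct_map_comp, biproduct_map_comp, biproduct_map_add]
    simp only [biprod.total, biproduct_map_id]
  inv_hom_id := by
    apply biprod.hom_ext' <;> apply biprod.hom_ext <;>
      simp [biproduct_map_comp, biproduct_map_zero, biproduct_map_id]

/-- Objects isomorphic to a finite biproduct of shifts `A⟦k⟧` with `A ∈ 𝒜` and `s k`. -/
private def SumShifts (𝒜 : Set C) (s : ℤ → Prop) (X : C) : Prop :=
  ∃ (n : ℕ) (W : Fin n → C),
    (∀ i, ∃ A ∈ 𝒜, ∃ k : ℤ, s k ∧ Nonempty (W i ≅ A⟦k⟧)) ∧ Nonempty (X ≅ ⨁ W)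

private lemma SumShifts.of_iso {𝒜 : Set C} {s : ℤ → Prop} {X Y : C} (e : X ≅ Y)
    (h : SumShifts 𝒜 s X) : SumShifts 𝒜 s Y := by
  obtain ⟨n, W, h1, ⟨e'⟩⟩ := h
  exact ⟨n, W, h1, ⟨e.symm.trans e'⟩⟩

private lemma SumShifts.mono {𝒜 : Set C} {s t : ℤ → Prop} {X : C}
    (h : SumShifts 𝒜 s X) (hst : ∀ k, s k → t k) : SumShifts 𝒜 t X := by
  obtain ⟨n, W, h1, e⟩ := h
  refine ⟨n, W, fun i => ?_, e⟩
  obtain ⟨A, hA, k, hk, e'⟩ := h1 i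
  exact ⟨A, hA, k, hst k hk, e'⟩

private lemma SumShifts.singleton {𝒜 : Set C} {A : C} (hA : A ∈ 𝒜) (k : ℤ) :
    SumShifts 𝒜 (fun l => l = k) (A⟦k⟧) :=
  ⟨1, fun _ => A⟦k⟧, fun _ => ⟨A, hA, k, rfl, ⟨Iso.refl _⟩⟩,
    ⟨(biproductUniqueIso (fun _ : Fin 1 => A⟦k⟧)).symm⟩⟩

private lemma SumShifts.of_isZero {𝒜 : Set C} (s : ℤ → Prop) {X : C} (h : IsZero X) :
    SumShifts 𝒜 s X :=
  ⟨0, fun i => i.elim0, fun i => i.elim0, ⟨h.iso (isZero_biproduct_fin0 _)⟩⟩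

private lemma SumShifts.shift {𝒜 : Set C} {s t : ℤ → Prop} {X : C}
    (h : SumShifts 𝒜 s X) (a : ℤ) (hst : ∀ k, s k → t (k + a)) :
    SumShifts 𝒜 t (X⟦a⟧) := by
  obtain ⟨n, W, h1, ⟨e⟩⟩ := h
  refine ⟨n, fun i => (W i)⟦a⟧, fun i => ?_, ?_⟩
  · obtain ⟨A, hA, k, hk, ⟨e'⟩⟩ := h1 i
    exact ⟨A, hA, k + a, hst k hk,
      ⟨(shiftFunctor C a).mapIso e' ≪≫ ((shiftFunctorAdd' C k a (k + a) rfl).app A).symm⟩⟩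
  · exact ⟨(shiftFunctor C a).mapIso e ≪≫ (shiftFunctor C a).mapBiproduct W⟩

private lemma SumShifts.homZero {𝒜 : Set C}
    (hb : ∀ ⦃A B : C⦄, A ∈ 𝒜 → B ∈ 𝒜 → ∀ m : ℤ, m < 0 → ∀ f : A ⟶ B⟦m⟧, f = 0)
    {s t : ℤ → Prop} {X Y : C} (hX : SumShifts 𝒜 s X) (hY : SumShifts 𝒜 t Y)
    (hst : ∀ k l, s k → t l → l < k) (f : X ⟶ Y) : f = 0 := by
  obtain ⟨n, W, h1, ⟨eX⟩⟩ := hX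
  obtain ⟨m, V, h2, ⟨eY⟩⟩ := hY
  refine hom_zero_of_components eX eY (fun i j g => ?_) f
  obtain ⟨A, hA, k, hk, ⟨e1⟩⟩ := h1 i
  obtain ⟨B, hB, l, hl, ⟨e2⟩⟩ := h2 j
  have hz : e1.inv ≫ g ≫ e2.hom = 0 := by
    apply shift_hom_zero' k l
    intro g'
    exact hb hA hB (l - k) (by have := hst k l hk hl; omega) g'
  calc g = e1.hom ≫ (e1.inv ≫ g ≫ e2.hom) ≫ e2.inv := by simp
    _ = 0 := by rw [hz]; simp

private lemma SumShifts.split {𝒜 : Set C} (h0 : ∀ Z : C, IsZero Z → Z ∈ 𝒜)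
    (s t : ℤ → Prop) {X : C} (h : SumShifts 𝒜 t X)
    (k₁ : ℤ) (ht₁ : t k₁) (hs₁ : s k₁) (k₂ : ℤ) (ht₂ : t k₂) (hs₂ : ¬ s k₂) :
    ∃ P P' : C, Nonempty (X ≅ P ⊞ P') ∧ SumShifts 𝒜 (fun k => t k ∧ s k) P ∧
      SumShifts 𝒜 (fun k => t k ∧ ¬ s k) P' := by
  classical
  obtain ⟨n, W, h1, ⟨eX⟩⟩ := h
  choose A hA k hk e using h1
  let U : Fin n → C := fun i => if s (k i) then W i else 0
  let V : Fin n → C := fun i => if s (k i) then 0 else W i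
  have eUV : ∀ i, W i ≅ U i ⊞ V i := fun i => by
    by_cases hi : s (k i)
    · simp only [U, V, if_pos hi]
      exact isoBiprodZero (isZero_zero C)
    · simp only [U, V, if_neg hi]
      exact isoZeroBiprod (isZero_zero C)
  refine ⟨⨁ U, ⨁ V, ⟨eX ≪≫ biproduct.mapIso eUV ≪≫ biproductBiprodIso U V⟩, ?_, ?_⟩
  · refine ⟨n, U, fun i => ?_, ⟨Iso.refl _⟩⟩
    by_cases hi : s (k i)
    · refine ⟨A i, hA i, k i, ⟨hk i, hi⟩, ?_⟩
      simpa only [U, if_pos hi] using e i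
    · refine ⟨0, h0 0 (isZero_zero C), k₁, ⟨ht₁, hs₁⟩, ?_⟩
      refine ⟨?_⟩
      simp only [U, if_neg hi]
      exact (isZero_zero C).iso ((shiftFunctor C k₁).map_isZero (isZero_zero C))
  · refine ⟨n, V, fun i => ?_, ⟨Iso.refl _⟩⟩
    by_cases hi : s (k i)
    · refine ⟨0, h0 0 (isZero_zero C), k₂, ⟨ht₂, hs₂⟩, ?_⟩
      refine ⟨?_⟩
      simp only [V, if_pos hi]
      exact (isZero_zero C).iso ((shiftFunctor C k₂).map_isZero (isZero_zero C))
    · refine ⟨A i, hA i, k i, ⟨hk i, hi⟩, ?_⟩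
      simpa only [V, if_neg hi] using e i


private lemma biproduct_mem {𝒜 : Set C}
    (h𝒜_iso : ∀ ⦃X Y : C⦄, (X ≅ Y) → X ∈ 𝒜 → Y ∈ 𝒜)
    (h𝒜_zero : ∀ X : C, IsZero X → X ∈ 𝒜)
    (h𝒜_sum : ∀ ⦃X Y : C⦄, X ∈ 𝒜 → Y ∈ 𝒜 → (X ⊞ Y) ∈ 𝒜) :
    ∀ (n : ℕ) (U : Fin n → C), (∀ i, U i ∈ 𝒜) → (⨁ U) ∈ 𝒜 := by
  intro n
  induction n with
  | zero => exact fun U _ => h𝒜_zero _ (isZero_biproduct_fin0 U)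
  | succ n ih =>
    intro U hU
    exact h𝒜_iso (finSuccBiproductIso U).symm
      (h𝒜_sum (hU 0) (ih (fun i => U i.succ) (fun i => hU i.succ)))

private lemma sumShifts_zero_mem {𝒜 : Set C}
    (h𝒜_iso : ∀ ⦃X Y : C⦄, (X ≅ Y) → X ∈ 𝒜 → Y ∈ 𝒜)
    (h𝒜_zero : ∀ X : C, IsZero X → X ∈ 𝒜)
    (h𝒜_sum : ∀ ⦃X Y : C⦄, X ∈ 𝒜 → Y ∈ 𝒜 → (X ⊞ Y) ∈ 𝒜)
    {s : ℤ → Prop} (hs : ∀ k, s k → k = 0) {X : C} (h : SumShifts 𝒜 s X) : X ∈ 𝒜 := by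
  obtain ⟨n, W, h1, ⟨eX⟩⟩ := h
  refine h𝒜_iso eX.symm (biproduct_mem h𝒜_iso h𝒜_zero h𝒜_sum n W (fun i => ?_))
  obtain ⟨A, hA, k, hk, ⟨e⟩⟩ := h1 i
  obtain rfl := hs k hk
  exact h𝒜_iso (e ≪≫ (shiftFunctorZero C ℤ).app A).symm hA

private lemma mem_sumShifts_self {𝒜 : Set C} {A : C} (hA : A ∈ 𝒜) :
    SumShifts 𝒜 (fun l => l = 0) A :=
  (SumShifts.singleton hA 0).of_iso ((shiftFunctorZero C ℤ).app A)

end Aux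

/-- if `𝒜` is a full additive subcategory such that every object of `D` is a
finite direct sum of shifts of objects of `𝒜`, and `Hom(A, B⟦m⟧) = 0` for `A, B ∈ 𝒜` and
`m < 0`, then `(add ⋃_{n ≥ 0} 𝒜⟦n⟧, add ⋃_{n ≤ 0} 𝒜⟦n⟧)` is a bounded t-structure with
heart `𝒜`, and it is hereditary. -/
theorem stmt_5 (𝒜 : Set C)
    (h𝒜_iso : ∀ ⦃X Y : C⦄, (X ≅ Y) → X ∈ 𝒜 → Y ∈ 𝒜)
    (h𝒜_zero : ∀ X : C, IsZero X → X ∈ 𝒜)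
    (h𝒜_sum : ∀ ⦃X Y : C⦄, X ∈ 𝒜 → Y ∈ 𝒜 → (X ⊞ Y) ∈ 𝒜)
    (ha : ∀ X : C, X ∈ addClosure C {W | ∃ A ∈ 𝒜, ∃ n : ℤ, Nonempty (W ≅ A⟦n⟧)})
    (hb : ∀ ⦃A B : C⦄, A ∈ 𝒜 → B ∈ 𝒜 → ∀ m : ℤ, m < 0 → ∀ f : A ⟶ B⟦m⟧, f = 0) :
    ∃ t : TStruct C,
      t.le = addClosure C {W | ∃ A ∈ 𝒜, ∃ n : ℤ, 0 ≤ n ∧ Nonempty (W ≅ A⟦n⟧)} ∧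
      t.ge = addClosure C {W | ∃ A ∈ 𝒜, ∃ n : ℤ, n ≤ 0 ∧ Nonempty (W ≅ A⟦n⟧)} ∧
      t.Bounded ∧ t.heart = 𝒜 ∧
      (∀ ⦃A B : C⦄, A ∈ 𝒜 → B ∈ 𝒜 → ∀ n : ℤ, 2 ≤ n → ∀ f : A ⟶ B⟦n⟧, f = 0) := by
  classical
  have haS : ∀ X : C, SumShifts 𝒜 (fun _ => True) X := by
    intro X
    obtain ⟨n, f, hf, e⟩ := ha X
    refine ⟨n, f, fun i => ?_, e⟩
    obtain ⟨A, hA, k, e'⟩ := hf i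
    exact ⟨A, hA, k, trivial, e'⟩
  -- the hereditary vanishing, proved first
  have hered : ∀ ⦃A B : C⦄, A ∈ 𝒜 → B ∈ 𝒜 → ∀ n : ℤ, 2 ≤ n → ∀ f : A ⟶ B⟦n⟧, f = 0 := by
    intro A B hA hB n hn f
    obtain ⟨Z, g, h, hT⟩ := Pretriangulated.distinguished_cocone_triangle f
    obtain ⟨Z₁, Z₂, ⟨eZ⟩, hZ1, hZ2⟩ := SumShifts.split h𝒜_zero (fun k => k ≤ 1)
      (fun _ => True) (haS Z) 0 trivial (by omega) 2 trivial (by omega)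
    have hBn : SumShifts 𝒜 (fun l => l = n) (B⟦n⟧) := SumShifts.singleton hB n
    have hA1 : SumShifts 𝒜 (fun l => l = 1) (A⟦(1:ℤ)⟧) := SumShifts.singleton hA 1
    have hA0 : SumShifts 𝒜 (fun l => l = 0) A := mem_sumShifts_self hA
    have hι : (biprod.inr ≫ eZ.inv) ≫ h = 0 :=
      SumShifts.homZero hb hZ2 hA1 (by rintro k l ⟨_, hk⟩ rfl; omega) _
    obtain ⟨r₀, hr₀⟩ := Pretriangulated.Triangle.coyoneda_exact₃ _ hT (biprod.inr ≫ eZ.inv) hι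
    let r : Z₂ ⟶ B⟦n⟧ := r₀
    have hr : biprod.inr ≫ eZ.inv = r ≫ g := hr₀
    have hZ1hom : ∀ q : B⟦n⟧ ⟶ Z₁, q = 0 := fun q =>
      SumShifts.homZero hb hBn hZ1 (by rintro k l rfl ⟨_, hl⟩; omega) q
    have hg : g = (g ≫ eZ.hom ≫ biprod.snd) ≫ (biprod.inr ≫ eZ.inv) := by
      have h1 : g ≫ eZ.hom = (g ≫ eZ.hom ≫ biprod.snd) ≫ biprod.inr := by
        apply biprod.hom_ext
        · simp only [Category.assoc, biprod.inr_fst, Limits.comp_zero]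
          exact hZ1hom _
        · simp
      calc g = (g ≫ eZ.hom) ≫ eZ.inv := by simp
        _ = _ := by rw [h1, Category.assoc]
    have hcomp : f ≫ g = 0 := Pretriangulated.comp_distTriang_mor_zero₁₂ _ hT
    have key : (𝟙 (B⟦n⟧) - g ≫ eZ.hom ≫ biprod.snd ≫ r) ≫ g = 0 := by
      rw [Preadditive.sub_comp, Category.id_comp]
      have : (g ≫ eZ.hom ≫ biprod.snd ≫ r) ≫ g
          = (g ≫ eZ.hom ≫ biprod.snd) ≫ (r ≫ g) := by
        simp only [Category.assoc]
      rw [this, ← hr, ← hg, sub_self]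
    obtain ⟨b, hbb⟩ := Pretriangulated.Triangle.coyoneda_exact₂ _ hT _ key
    have hb0 : b = 0 := SumShifts.homZero hb hBn hA0 (by rintro k l rfl rfl; omega) b
    rw [hb0, Limits.zero_comp] at hbb
    have hid : 𝟙 (B⟦n⟧) = g ≫ eZ.hom ≫ biprod.snd ≫ r := sub_eq_zero.mp hbb
    calc f = f ≫ 𝟙 (B⟦n⟧) := (Category.comp_id f).symm
      _ = (f ≫ g) ≫ eZ.hom ≫ biprod.snd ≫ r := by rw [hid]; simp only [Category.assoc]
      _ = 0 := by rw [hcomp, Limits.zero_comp]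
  refine ⟨{ le := addClosure C {W | ∃ A ∈ 𝒜, ∃ n : ℤ, 0 ≤ n ∧ Nonempty (W ≅ A⟦n⟧)},
            ge := addClosure C {W | ∃ A ∈ 𝒜, ∃ n : ℤ, n ≤ 0 ∧ Nonempty (W ≅ A⟦n⟧)},
            le_iso := fun X Y e hX => SumShifts.of_iso e hX,
            ge_iso := fun X Y e hX => SumShifts.of_iso e hX,
            hom_zero := fun X Y hX hY f =>
              SumShifts.homZero hb (s := fun k => 0 ≤ k) hX
                (SumShifts.shift (t := fun k => k ≤ -1) hY (-1) (fun k hk => by omega))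
                (fun k l hk hl => by omega) f,
            le_shift := fun X hX =>
              SumShifts.shift (t := fun k => 0 ≤ k) hX 1 (fun k hk => by omega),
            ge_shift := fun X hX =>
              SumShifts.shift (t := fun k => k ≤ 0) hX (-1) (fun k hk => by omega),
            exists_triangle := ?_ }, rfl, rfl, ?_, ?_, hered⟩
  · -- exists_triangle
    intro X
    obtain ⟨P, P', ⟨eX⟩, hP, hP'⟩ := SumShifts.split h𝒜_zero (fun k => 0 ≤ k)
      (fun _ => True) (haS X) 0 trivial le_rfl (-1) trivial (by omega)
    have eD : ((P'⟦(1:ℤ)⟧)⟦(-1:ℤ)⟧ : C) ≅ P' :=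
      (shiftFunctorCompIsoId C 1 (-1) (by ring)).app P'
    refine ⟨P, P'⟦(1:ℤ)⟧, biprod.inl ≫ eX.inv, eX.hom ≫ biprod.snd ≫ eD.inv, 0, ?_, ?_, ?_⟩
    · refine Pretriangulated.isomorphic_distinguished _
        (Pretriangulated.binaryBiproductTriangle_distinguished P P') _ ?_
      refine Pretriangulated.Triangle.isoMk _ _ (Iso.refl P) eX eD ?_ ?_ ?_
      · erw [Category.assoc, Iso.inv_hom_id, Category.comp_id, Category.id_comp]; rfl
      · erw [Category.assoc, Category.assoc, Iso.inv_hom_id, Category.comp_id]; rfl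
      · erw [Limits.zero_comp, Limits.comp_zero]
    · exact SumShifts.mono hP (fun k hk => hk.2)
    · exact SumShifts.shift (t := fun k => k ≤ 0) hP' 1 (fun k hk => by
        have := hk.2; omega)
  · -- Bounded
    intro X
    obtain ⟨m, W, h1, ⟨eX⟩⟩ := haS X
    choose A hA k hk e using h1
    set N : ℤ := ∑ i, |k i| with hN
    have hNi : ∀ i, |k i| ≤ N := fun i =>
      Finset.single_le_sum (fun j _ => abs_nonneg (k j)) (Finset.mem_univ i)
    have hN0 : 0 ≤ N := Finset.sum_nonneg (fun j _ => abs_nonneg (k j))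
    have hXS : SumShifts 𝒜 (fun l => ∃ i, l = k i) X :=
      ⟨m, W, fun i => ⟨A i, hA i, k i, ⟨i, rfl⟩, e i⟩, ⟨eX⟩⟩
    refine ⟨-N, N, by omega, ?_, ?_⟩
    · exact SumShifts.shift (t := fun l => 0 ≤ l) hXS N (by
        rintro l ⟨i, rfl⟩
        have h1 := hNi i
        have h2 := neg_abs_le (k i)
        omega)
    · exact SumShifts.shift (t := fun l => l ≤ 0) hXS (-N) (by
        rintro l ⟨i, rfl⟩
        have h1 := hNi i
        have h2 := le_abs_self (k i)
        omega)
  · -- heart = 𝒜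
    apply Set.ext
    intro X
    constructor
    · rintro ⟨hXle, hXge⟩
      obtain ⟨P, P', ⟨eP⟩, hP, hP'⟩ := SumShifts.split h𝒜_zero (fun k => k = 0)
        (fun k => 0 ≤ k) hXle 0 le_rfl rfl 1 (by omega) (by omega)
      obtain ⟨Q, Q', ⟨eQ⟩, hQ, hQ'⟩ := SumShifts.split h𝒜_zero (fun k => k = 0)
        (fun k => k ≤ 0) hXge 0 le_rfl rfl (-1) (by omega) (by omega)
      have γ : P ⊞ P' ≅ Q ⊞ Q' := eP.symm ≪≫ eQ
      have hPQ : ∀ f : P' ⟶ Q, f = 0 := fun f =>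
        SumShifts.homZero hb hP' hQ (by rintro a b ⟨ha1, ha2⟩ ⟨_, rfl⟩; omega) f
      have hPQ' : ∀ f : P' ⟶ Q', f = 0 := fun f =>
        SumShifts.homZero hb hP' hQ' (by rintro a b ⟨ha1, ha2⟩ ⟨hb1, hb2⟩; omega) f
      have h1 : biprod.inr ≫ γ.hom = 0 := by
        apply biprod.hom_ext
        · rw [Category.assoc, Limits.zero_comp]
          exact hPQ _
        · rw [Category.assoc, Limits.zero_comp]
          exact hPQ' _
      have h2 : (biprod.inr : P' ⟶ P ⊞ P') = 0 := by
        calc (biprod.inr : P' ⟶ P ⊞ P') = (biprod.inr ≫ γ.hom) ≫ γ.inv := by simp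
          _ = 0 := by rw [h1, Limits.zero_comp]
      have hzP' : IsZero P' := by
        rw [IsZero.iff_id_eq_zero]
        calc 𝟙 P' = biprod.inr ≫ biprod.snd := by simp
          _ = 0 := by rw [h2, Limits.zero_comp]
      have ePX : X ≅ P := eP ≪≫ (isoBiprodZero hzP').symm
      exact h𝒜_iso ePX.symm
        (sumShifts_zero_mem h𝒜_iso h𝒜_zero h𝒜_sum (fun k hk => hk.2) hP)
    · intro hX
      exact ⟨SumShifts.mono (mem_sumShifts_self hX) (fun k hk => by omega),
        SumShifts.mono (mem_sumShifts_self hX) (fun k hk => by omega)⟩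
end

section
/- Assume every object of D is a finite direct sum of indecomposable objects. Let U be a path-closed class of indecomposable objects of D and V its complement in the class of indecomposables. Then: (i) every morphism from an object of add U to an object of add V is zero, and every morphism from an object of add V to an object of add U is zero; (ii) every object of D is isomorphic to X₁ ⊕ X₂ with X₁ ∈ add U and X₂ ∈ add V; (iii) add U is a triangulated subcategory of D: it contains the zero object, is closed under [1] and [-1], and for every morphism u : A → B with A, B ∈ add U there is a distinguished triangle A → B → C → A[1] with C ∈ add U. -/
open CategoryTheory CategoryTheory.Limits CategoryTheory.Pretriangulated

universe v u

variable (C : Type u) [Category.{v} C] [Preadditive C] [HasZeroObject C]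
  [HasShift C ℤ] [∀ n : ℤ, (shiftFunctor C n).Additive] [Pretriangulated C]
  [HasFiniteBiproducts C]

variable {C}

set_option linter.unusedSectionVars false

section Aux

lemma isZero_shift_iff (X : C) (n : ℤ) : IsZero ((shiftFunctor C n).obj X) ↔ IsZero X := by
  constructor
  · intro h
    exact ((shiftFunctor C (-n)).map_isZero h).of_iso ((shiftEquiv C n).unitIso.app X)
  · exact fun h => (shiftFunctor C n).map_isZero h

lemma indec_iso {X Y : C} (e : X ≅ Y) (h : Indec C X) : Indec C Y := by
  refine ⟨fun hz => h.1 (hz.of_iso e), fun A B e' => h.2 A B (e.trans e')⟩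

lemma indec_shift {X : C} (h : Indec C X) (n : ℤ) : Indec C ((shiftFunctor C n).obj X) := by
  haveI := preservesBinaryBiproducts_of_preservesBiproducts (shiftFunctor C (-n))
  refine ⟨fun hz => h.1 ((isZero_shift_iff X n).mp hz), fun A B e => ?_⟩
  have e2 : X ≅ ((shiftFunctor C (-n)).obj A) ⊞ ((shiftFunctor C (-n)).obj B) :=
    ((shiftEquiv C n).unitIso.app X).trans
      (((shiftFunctor C (-n)).mapIso e).trans ((shiftFunctor C (-n)).mapBiprod A B))
  rcases h.2 _ _ e2 with hA | hB
  · exact Or.inl ((isZero_shift_iff A (-n)).mp hA)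
  · exact Or.inr ((isZero_shift_iff B (-n)).mp hB)

/-- A single-step path from a nonzero morphism. -/
lemma hasPath_of_hom {X Y : C} (hX : Indec C X) (hY : Indec C Y) (g : X ⟶ Y) (hg : g ≠ 0) :
    HasPath C X Y := by
  refine ⟨1, ![X, Y], rfl, rfl, ?_, ?_⟩
  · intro i
    fin_cases i <;> assumption
  · intro i
    fin_cases i
    exact Or.inl ⟨g, hg⟩

/-- A single-step path from a shift iso. -/
lemma hasPath_of_shift {X Y : C} (hX : Indec C X) (hY : Indec C Y)
    (e : Y ≅ (shiftFunctor C (1 : ℤ)).obj X) : HasPath C X Y := by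
  refine ⟨1, ![X, Y], rfl, rfl, ?_, ?_⟩
  · intro i
    fin_cases i <;> assumption
  · intro i
    fin_cases i
    exact Or.inr ⟨e⟩

end Aux
section Aux2

lemma addClosure_iso {S : Set C} {X Y : C} (e : X ≅ Y) (h : X ∈ addClosure C S) :
    Y ∈ addClosure C S := by
  obtain ⟨n, f, hf, ⟨e'⟩⟩ := h
  exact ⟨n, f, hf, ⟨e.symm.trans e'⟩⟩

lemma mem_addClosure_fintype {S : Set C} {J : Type} [Fintype J] (f : J → C)
    (hf : ∀ j, f j ∈ S) {X : C} (e : X ≅ ⨁ f) : X ∈ addClosure C S := by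
  classical
  let e' := Fintype.equivFin J
  refine ⟨Fintype.card J, fun k => f (e'.symm k), fun k => hf _, ⟨e.trans ?_⟩⟩
  exact biproduct.whiskerEquiv e' (fun j => eqToIso (by simp))

lemma zero_mem_addClosure {S : Set C} {X : C} (h : IsZero X) : X ∈ addClosure C S := by
  refine ⟨0, Fin.elim0, fun i => i.elim0, ⟨h.iso ?_⟩⟩
  rw [IsZero.iff_id_eq_zero]
  apply biproduct.hom_ext
  intro j
  exact j.elim0

lemma hom_zero_of_components_s6 {J K : Type} [Fintype J] [Fintype K] {a : J → C} {b : K → C}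
    {X Y : C} (eX : X ≅ ⨁ a) (eY : Y ≅ ⨁ b)
    (h : ∀ j k (g : a j ⟶ b k), g = 0) (f : X ⟶ Y) : f = 0 := by
  have : eX.inv ≫ f ≫ eY.hom = 0 := by
    apply biproduct.hom_ext
    intro k
    apply biproduct.hom_ext'
    intro j
    simpa using h j k _
  calc f = eX.hom ≫ (eX.inv ≫ f ≫ eY.hom) ≫ eY.inv := by simp
    _ = 0 := by rw [this]; simp

lemma biproduct_split {n : ℕ} (f : Fin n → C) (P : Fin n → Prop) [DecidablePred P] :
    Nonempty (⨁ f ≅ (⨁ fun j : {i // P i} => f j.1) ⊞ (⨁ fun j : {i // ¬ P i} => f j.1)) := by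
  refine ⟨{
    hom := biprod.lift (biproduct.lift fun j => biproduct.π f j.1)
      (biproduct.lift fun j => biproduct.π f j.1)
    inv := biprod.desc (biproduct.desc fun j => biproduct.ι f j.1)
      (biproduct.desc fun j => biproduct.ι f j.1)
    hom_inv_id := ?_
    inv_hom_id := ?_ }⟩
  · rw [biprod.lift_desc, biproduct.lift_desc, biproduct.lift_desc]
    rw [← biproduct.total]
    exact Fintype.sum_subtype_add_sum_subtype P (fun i => biproduct.π f i ≫ biproduct.ι f i)
  · ext j k
    all_goals simp [biproduct.ι_π]
    · by_cases h : j = k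
      · subst h; simp
      · rw [dif_neg (fun hc => h (Subtype.ext hc)), dif_neg h]
    · intro h; exact absurd (h ▸ j.2) k.2
    · intro h; exact absurd (h.symm ▸ k.2) j.2
    · by_cases h : j = k
      · subst h; simp
      · rw [dif_neg (fun hc => h (Subtype.ext hc)), dif_neg h]

end Aux2
variable (C)

/-- auxiliary statement. -/
theorem stmt_6 (hdec : EveryObjectDecomposes C)
    (U : Set C) (hU_ind : ∀ X ∈ U, Indec C X)
    (hU_iso : ∀ ⦃X Y : C⦄, (X ≅ Y) → X ∈ U → Y ∈ U)
    (hU_path : ∀ ⦃X Y : C⦄, HasPath C X Y → (X ∈ U ↔ Y ∈ U)) :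
    (∀ ⦃X Y : C⦄, X ∈ addClosure C U → Y ∈ addClosure C {Z | Indec C Z ∧ Z ∉ U} →
        ∀ f : X ⟶ Y, f = 0) ∧
    (∀ ⦃X Y : C⦄, X ∈ addClosure C {Z | Indec C Z ∧ Z ∉ U} → Y ∈ addClosure C U →
        ∀ f : X ⟶ Y, f = 0) ∧
    (∀ X : C, ∃ X₁ X₂ : C, X₁ ∈ addClosure C U ∧ X₂ ∈ addClosure C {Z | Indec C Z ∧ Z ∉ U} ∧
        Nonempty (X ≅ X₁ ⊞ X₂)) ∧
    (∀ Z : C, IsZero Z → Z ∈ addClosure C U) ∧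
    (∀ X ∈ addClosure C U, X⟦(1 : ℤ)⟧ ∈ addClosure C U) ∧
    (∀ X ∈ addClosure C U, X⟦(-1 : ℤ)⟧ ∈ addClosure C U) ∧
    (∀ A B : C, A ∈ addClosure C U → B ∈ addClosure C U → ∀ u : A ⟶ B,
        ∃ (W : C) (g : B ⟶ W) (h : W ⟶ A⟦(1 : ℤ)⟧), W ∈ addClosure C U ∧
          (Triangle.mk u g h ∈ distTriang C)) := by
  classical
  set V : Set C := {Z | Indec C Z ∧ Z ∉ U} with hV
  -- basic hom-vanishing between indecomposables
  have hUV : ∀ {X Y : C}, X ∈ U → Y ∈ V → ∀ g : X ⟶ Y, g = 0 := by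
    intro X Y hX hY g
    by_contra hg
    exact hY.2 ((hU_path (hasPath_of_hom (hU_ind X hX) hY.1 g hg)).mp hX)
  have hVU : ∀ {X Y : C}, X ∈ V → Y ∈ U → ∀ g : X ⟶ Y, g = 0 := by
    intro X Y hX hY g
    by_contra hg
    exact hX.2 ((hU_path (hasPath_of_hom hX.1 (hU_ind Y hY) g hg)).mpr hY)
  -- (i)
  have part1 : ∀ ⦃X Y : C⦄, X ∈ addClosure C U → Y ∈ addClosure C V →
      ∀ f : X ⟶ Y, f = 0 := by
    rintro X Y ⟨n, a, ha, ⟨eX⟩⟩ ⟨m, b, hb, ⟨eY⟩⟩ f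
    exact hom_zero_of_components_s6 eX eY (fun j k g => hUV (ha j) (hb k) g) f
  have part2 : ∀ ⦃X Y : C⦄, X ∈ addClosure C V → Y ∈ addClosure C U →
      ∀ f : X ⟶ Y, f = 0 := by
    rintro X Y ⟨n, a, ha, ⟨eX⟩⟩ ⟨m, b, hb, ⟨eY⟩⟩ f
    exact hom_zero_of_components_s6 eX eY (fun j k g => hVU (ha j) (hb k) g) f
  -- (ii)
  have part3 : ∀ X : C, ∃ X₁ X₂ : C, X₁ ∈ addClosure C U ∧ X₂ ∈ addClosure C V ∧
      Nonempty (X ≅ X₁ ⊞ X₂) := by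
    intro X
    obtain ⟨n, f, hf, ⟨e⟩⟩ := hdec X
    obtain ⟨esplit⟩ := biproduct_split f (fun i => f i ∈ U)
    have m1 : (⨁ fun j : {i // f i ∈ U} => f j.1) ∈ addClosure C U :=
      mem_addClosure_fintype _ (fun j => j.2) (Iso.refl _)
    have m2 : (⨁ fun j : {i // ¬ f i ∈ U} => f j.1) ∈ addClosure C V := by
      refine mem_addClosure_fintype _ (fun j => ?_) (Iso.refl _)
      exact ⟨hf j.1, j.2⟩
    exact ⟨_, _, m1, m2, ⟨e.trans esplit⟩⟩
  -- shift closure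
  have shiftU : ∀ X ∈ addClosure C U, X⟦(1 : ℤ)⟧ ∈ addClosure C U := by
    rintro X ⟨n, f, hf, ⟨e⟩⟩
    refine mem_addClosure_fintype ((shiftFunctor C (1 : ℤ)).obj ∘ f) (fun j => ?_)
      (((shiftFunctor C (1 : ℤ)).mapIso e).trans (Functor.mapBiproduct _ f))
    exact (hU_path (hasPath_of_shift (hU_ind _ (hf j)) (indec_shift (hU_ind _ (hf j)) 1)
      (Iso.refl _))).mp (hf j)
  have shiftUneg : ∀ X ∈ addClosure C U, X⟦(-1 : ℤ)⟧ ∈ addClosure C U := by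
    rintro X ⟨n, f, hf, ⟨e⟩⟩
    refine mem_addClosure_fintype ((shiftFunctor C (-1 : ℤ)).obj ∘ f) (fun j => ?_)
      (((shiftFunctor C (-1 : ℤ)).mapIso e).trans (Functor.mapBiproduct _ f))
    have hind : Indec C ((shiftFunctor C (-1 : ℤ)).obj (f j)) :=
      indec_shift (hU_ind _ (hf j)) (-1)
    have hiso : f j ≅ (shiftFunctor C (1 : ℤ)).obj ((shiftFunctor C (-1 : ℤ)).obj (f j)) :=
      ((shiftEquiv C (1 : ℤ)).counitIso.app (f j)).symm
    exact (hU_path (hasPath_of_shift hind (hU_ind _ (hf j)) hiso)).mpr (hf j)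
  refine ⟨part1, part2, part3, fun Z hZ => zero_mem_addClosure hZ, shiftU, shiftUneg, ?_⟩
  -- (iii) cones
  intro A B hA hB u
  obtain ⟨W, g, h, hT⟩ := Pretriangulated.distinguished_cocone_triangle u
  obtain ⟨W₁, W₂, hW₁, hW₂, ⟨e⟩⟩ := part3 W
  have hA1 : (A⟦(1 : ℤ)⟧) ∈ addClosure C U := shiftU A hA
  -- show W₂ is zero
  have hz : IsZero W₂ := by
    rw [IsZero.iff_id_eq_zero]
    set i2 : W₂ ⟶ W := biprod.inr ≫ e.inv with hi2
    have h2 : i2 ≫ h = 0 := part2 hW₂ hA1 _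
    obtain ⟨φ, hφ⟩ := Triangle.coyoneda_exact₃ _ hT i2 h2
    have hgp : g ≫ (e.hom ≫ biprod.snd) = 0 := part1 hB hW₂ _
    calc 𝟙 W₂ = i2 ≫ (e.hom ≫ biprod.snd) := by simp [hi2]
      _ = φ ≫ (g ≫ (e.hom ≫ biprod.snd)) := by rw [hφ]; exact Category.assoc _ _ _
      _ = 0 := by exact (congrArg (fun t => φ ≫ t) hgp).trans Limits.comp_zero
  have hW : W ∈ addClosure C U :=
    addClosure_iso (e.trans (Limits.isoBiprodZero hz).symm).symm hW₁
  exact ⟨W, g, h, hW, hT⟩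
end

section
/- Assume D is a block: D is nonzero, every object of D is a finite direct sum of indecomposable objects, and the indecomposable objects of D are path-connected. Suppose X is an indecomposable object such that every nonzero morphism Y → X and every nonzero morphism X → Y′, with Y, Y′ indecomposable, is an isomorphism. Then every indecomposable object of D is isomorphic to X[s] for some s ∈ ℤ, and the endomorphism ring End(X) is a division ring (every nonzero endomorphism of X is invertible). -/
open CategoryTheory CategoryTheory.Limits CategoryTheory.Pretriangulated

universe v u

variable (C : Type u) [Category.{v} C] [Preadditive C] [HasZeroObject C]
  [HasShift C ℤ] [∀ n : ℤ, (shiftFunctor C n).Additive] [Pretriangulated C]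
  [HasFiniteBiproducts C]

variable {C}

variable (C)


attribute [local instance] hasBinaryBiproducts_of_finite_biproducts

lemma myAux_isZero_map (F : C ⥤ C) [F.Additive] {A : C} (hA : IsZero A) :
    IsZero (F.obj A) := by
  rw [IsZero.iff_id_eq_zero] at *
  rw [← F.map_id, hA, F.map_zero]

lemma myAux_indec_of_iso {X Y : C} (h : Indec C X) (e : X ≅ Y) : Indec C Y :=
  ⟨fun hz => h.1 (hz.of_iso e), fun A B e' => h.2 A B (e.trans e')⟩

lemma myAux_indec_shift {X : C} (h : Indec C X) (s : ℤ) : Indec C (X⟦s⟧) := by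
  constructor
  · intro hz
    exact h.1 (((shiftEquiv C s).unitIso.app X).isZero_iff.mpr
      (myAux_isZero_map C (shiftFunctor C (-s)) hz))
  · intro A B e
    haveI : PreservesBinaryBiproducts (shiftFunctor C (-s)) :=
      preservesBinaryBiproducts_of_preservesBiproducts _
    have e2 : X ≅ A⟦(-s : ℤ)⟧ ⊞ B⟦(-s : ℤ)⟧ :=
      (shiftEquiv C s).unitIso.app X ≪≫ (shiftFunctor C (-s)).mapIso e ≪≫
        (shiftFunctor C (-s)).mapBiprod A B
    rcases h.2 _ _ e2 with hz | hz
    · exact Or.inl (((shiftEquiv C (-s)).unitIso.app A).isZero_iff.mpr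
        (myAux_isZero_map C (shiftFunctor C (-(-s))) hz))
    · exact Or.inr (((shiftEquiv C (-s)).unitIso.app B).isZero_iff.mpr
        (myAux_isZero_map C (shiftFunctor C (-(-s))) hz))

lemma myAux_shift_ne_zero {A B : C} {g : A ⟶ B} (h : g ≠ 0) (s : ℤ) :
    (shiftFunctor C s).map g ≠ 0 := fun hz =>
  h ((shiftFunctor C s).map_injective (by rw [hz, Functor.map_zero]))

lemma myAux_precomp_ne_zero {A B D : C} (e : A ≅ B) {g : B ⟶ D} (h : g ≠ 0) :
    e.hom ≫ g ≠ 0 := by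
  intro hz
  apply h
  have := congrArg (fun k => e.inv ≫ k) hz
  simpa using this

lemma myAux_postcomp_ne_zero {A B D : C} {g : A ⟶ B} (e : B ≅ D) (h : g ≠ 0) :
    g ≫ e.hom ≠ 0 := by
  intro hz
  apply h
  have := congrArg (fun k => k ≫ e.inv) hz
  simpa using this

/-- Unshift: from `W ≅ X⟦s⟧` after shifting back. -/
lemma myAux_unshift {X W : C} (s : ℤ) (e : X ≅ W⟦(-s : ℤ)⟧) : Nonempty (W ≅ X⟦s⟧) :=
  ⟨((shiftFunctorCompIsoId C (-s) s (by omega)).app W).symm ≪≫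
    (shiftFunctor C s).mapIso e.symm⟩

/-- in a degenerate block, if every nonzero morphism into or out of the
indecomposable `X` (with indecomposable source/target) is invertible, then every
indecomposable is a shift of `X` and `End(X)` is a division ring. -/
theorem stmt_8 (hblock : IsBlock C) (X : C) (hX : Indec C X)
    (h₁ : ∀ Y : C, Indec C Y → ∀ f : Y ⟶ X, f ≠ 0 → IsIso f)
    (h₂ : ∀ Y : C, Indec C Y → ∀ f : X ⟶ Y, f ≠ 0 → IsIso f) :
    (∀ Y : C, Indec C Y → ∃ s : ℤ, Nonempty (Y ≅ X⟦s⟧)) ∧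
      (∀ f : X ⟶ X, f ≠ 0 → IsIso f) := by
  constructor
  · intro Y hY
    obtain ⟨n, f, h0, hlast, hind, hstep⟩ := hblock.2.2 X Y hX hY
    have key : ∀ i : Fin (n + 1), ∃ s : ℤ, Nonempty (f i ≅ X⟦s⟧) := by
      intro i
      induction i using Fin.induction with
      | zero =>
        rw [h0]
        exact ⟨0, ⟨((shiftFunctorZero C ℤ).app X).symm⟩⟩
      | succ i ih =>
        obtain ⟨s, ⟨e⟩⟩ := ih
        rcases hstep i with ⟨g, hg⟩ | ⟨g, hg⟩ | ⟨t, ⟨e'⟩⟩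
        · -- nonzero g : f i.castSucc ⟶ f i.succ
          have hWind : Indec C (f i.succ) := hind i.succ
          have hg' : e.inv ≫ g ≠ 0 := myAux_precomp_ne_zero C e.symm hg
          have hg'' : (shiftFunctor C (-s)).map (e.inv ≫ g) ≠ 0 :=
            myAux_shift_ne_zero C hg' (-s)
          have hh : ((shiftEquiv C s).unitIso.app X).hom ≫
              (shiftFunctor C (-s)).map (e.inv ≫ g) ≠ 0 :=
            myAux_precomp_ne_zero C _ hg''
          have := h₂ ((f i.succ)⟦(-s : ℤ)⟧) (myAux_indec_shift C hWind (-s)) _ hh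
          refine ⟨s, myAux_unshift C s (asIso (((shiftEquiv C s).unitIso.app X).hom ≫
            (shiftFunctor C (-s)).map (e.inv ≫ g)))⟩
        · -- nonzero g : f i.succ ⟶ f i.castSucc
          have hWind : Indec C (f i.succ) := hind i.succ
          have hg' : g ≫ e.hom ≠ 0 := myAux_postcomp_ne_zero C e hg
          have hg'' : (shiftFunctor C (-s)).map (g ≫ e.hom) ≠ 0 :=
            myAux_shift_ne_zero C hg' (-s)
          have hh : (shiftFunctor C (-s)).map (g ≫ e.hom) ≫
              ((shiftEquiv C s).unitIso.app X).inv ≠ 0 :=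
            myAux_postcomp_ne_zero C ((shiftEquiv C s).unitIso.app X).symm hg''
          have := h₁ ((f i.succ)⟦(-s : ℤ)⟧) (myAux_indec_shift C hWind (-s)) _ hh
          exact ⟨s, myAux_unshift C s (asIso ((shiftFunctor C (-s)).map (g ≫ e.hom) ≫
            ((shiftEquiv C s).unitIso.app X).inv)).symm⟩
        · -- f i.succ ≅ (f i.castSucc)⟦t⟧
          exact ⟨s + t, ⟨e' ≪≫ (shiftFunctor C t).mapIso e ≪≫
            ((shiftFunctorAdd C s t).app X).symm⟩⟩
    have := key (Fin.last n)
    rwa [hlast] at this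
  · intro f hf
    exact h₂ X hX f hf
end

section
/- Assume every object of D is a finite direct sum of indecomposable objects. Let u : X → Y be a nonzero non-invertible morphism between indecomposable objects. Then there is a distinguished triangle X --u--> Y --(∗,v)ᵗ--> Z′ ⊕ Z --(∗,w)--> X[1] such that Z is indecomposable, the component v : Y → Z is nonzero and non-invertible, and the component w : Z → X[1] is nonzero and non-invertible. -/
open CategoryTheory CategoryTheory.Limits CategoryTheory.Pretriangulated

universe v u

variable (C : Type u) [Category.{v} C] [Preadditive C] [HasZeroObject C]
  [HasShift C ℤ] [∀ n : ℤ, (shiftFunctor C n).Additive] [Pretriangulated C]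
  [HasFiniteBiproducts C]

variable {C}

section AuxStmt9

/-- A split mono in a pretriangulated category exhibits its target as a biproduct. -/
lemma split_mono_biprod_aux {A Z : C} (i : Z ⟶ A) (r : A ⟶ Z) (hir : i ≫ r = 𝟙 Z) :
    ∃ (B : C) (e : A ≅ Z ⊞ B), i ≫ e.hom = biprod.inl := by
  obtain ⟨B, p, q, hT⟩ := Pretriangulated.distinguished_cocone_triangle i
  have h1 : q ≫ i⟦(1 : ℤ)⟧' = 0 := comp_distTriang_mor_zero₃₁ _ hT
  have hq : q = 0 := by
    have : q ≫ (i ≫ r)⟦(1 : ℤ)⟧' = q := by rw [hir]; simp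
    rw [← this, Functor.map_comp, ← Category.assoc, h1, zero_comp]
  obtain ⟨e, he1, _⟩ := exists_iso_binaryBiproduct_of_distTriang _ hT hq
  exact ⟨B, e, he1⟩

/-- A split mono with nonzero source into an indecomposable object is an isomorphism. -/
lemma isIso_of_splitMono_indec_aux {A Z : C} (i : Z ⟶ A) (r : A ⟶ Z) (hir : i ≫ r = 𝟙 Z)
    (hA : Indec C A) (hZ : ¬ IsZero Z) : IsIso i := by
  obtain ⟨B, e, he⟩ := split_mono_biprod_aux i r hir
  rcases hA.2 Z B e with h | h
  · exact absurd h hZ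
  · have hinl : IsIso (biprod.inl : Z ⟶ Z ⊞ B) := by
      refine ⟨biprod.fst, by simp, ?_⟩
      apply biprod.hom_ext' <;> simp
      exact h.eq_of_src _ _
    have : i = biprod.inl ≫ e.inv := by rw [← he]; simp
    rw [this]
    infer_instance

lemma isZero_of_shift_aux {A : C} (n : ℤ) (h : IsZero (A⟦n⟧)) : IsZero A :=
  IsZero.of_iso ((shiftFunctor C (-n)).map_isZero h) ((shiftEquiv C n).unitIso.app A)

lemma indec_shift_aux {A : C} (hA : Indec C A) (n : ℤ) : Indec C (A⟦n⟧) := by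
  have : PreservesBinaryBiproducts (shiftFunctor C (-n)) :=
    preservesBinaryBiproducts_of_preservesBiproducts _
  refine ⟨fun h => hA.1 (isZero_of_shift_aux n h), fun P Q e => ?_⟩
  have e2 : A ≅ P⟦(-n : ℤ)⟧ ⊞ Q⟦(-n : ℤ)⟧ :=
    (shiftEquiv C n).unitIso.app A ≪≫ (shiftFunctor C (-n)).mapIso e ≪≫
      Functor.mapBiprod _ P Q
  rcases hA.2 _ _ e2 with h | h
  · exact Or.inl (isZero_of_shift_aux (-n) h)
  · exact Or.inr (isZero_of_shift_aux (-n) h)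

end AuxStmt9

variable (C)

/-- for a nonzero non-invertible `u : X ⟶ Y` between indecomposables there is a
distinguished triangle `X ⟶ Y ⟶ Z' ⊞ Z ⟶ X⟦1⟧` with `Z` indecomposable and the components
`v : Y ⟶ Z` and `w : Z ⟶ X⟦1⟧` nonzero and non-invertible. -/
theorem stmt_9 (hdec : EveryObjectDecomposes C) (X Y : C) (hX : Indec C X) (hY : Indec C Y)
    (u : X ⟶ Y) (hu : u ≠ 0) (hui : ¬ IsIso u) :
    ∃ (Z' Z : C) (f : Y ⟶ Z' ⊞ Z) (g : Z' ⊞ Z ⟶ X⟦(1 : ℤ)⟧),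
      (Triangle.mk u f g ∈ distTriang C) ∧ Indec C Z ∧
      f ≫ biprod.snd ≠ 0 ∧ ¬ IsIso (f ≫ biprod.snd) ∧
      biprod.inr ≫ g ≠ 0 ∧ ¬ IsIso (biprod.inr ≫ g) := by
  obtain ⟨W, f, g, hT⟩ := Pretriangulated.distinguished_cocone_triangle u
  have hW : ¬ IsZero W := fun h => hui ((Triangle.isZero₃_iff_isIso₁ _ hT).1 h)
  obtain ⟨n, Zs, hZind, ⟨eW⟩⟩ := hdec W
  have hn : 0 < n := by
    rcases Nat.eq_zero_or_pos n with rfl | h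
    · exfalso
      apply hW
      refine IsZero.of_iso ?_ eW
      rw [IsZero.iff_id_eq_zero]
      apply biproduct.hom_ext
      intro j
      exact j.elim0
    · exact h
  let j : Fin n := ⟨0, hn⟩
  let Z : C := Zs j
  have hZ : Indec C Z := hZind j
  let ι : Z ⟶ W := biproduct.ι Zs j ≫ eW.inv
  have hιρ : ι ≫ (eW.hom ≫ biproduct.π Zs j) = 𝟙 Z := by simp [ι]; rfl
  obtain ⟨Z', e, he⟩ := split_mono_biprod_aux ι _ hιρ
  let ρ : W ⟶ Z := e.hom ≫ biprod.fst
  have hιρ' : ι ≫ ρ = 𝟙 Z := by rw [show ι ≫ ρ = (ι ≫ e.hom) ≫ biprod.fst by simp [ρ], he]; simp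
  let v : Y ⟶ Z := f ≫ ρ
  let w : Z ⟶ X⟦(1 : ℤ)⟧ := ι ≫ g
  have huf : u ≫ f = 0 := comp_distTriang_mor_zero₁₂ _ hT
  have hgu : g ≫ u⟦(1 : ℤ)⟧' = 0 := comp_distTriang_mor_zero₃₁ _ hT
  have hw_iso_imp : IsIso w → u = 0 := by
    intro hiso
    have h1 : (inv w ≫ ι) ≫ g = 𝟙 (X⟦(1 : ℤ)⟧) := by
      rw [Category.assoc]
      exact IsIso.inv_hom_id w
    have h2 : u⟦(1 : ℤ)⟧' = 0 := by
      calc u⟦(1 : ℤ)⟧' = ((inv w ≫ ι) ≫ g) ≫ u⟦(1 : ℤ)⟧' := by rw [h1, Category.id_comp]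
        _ = (inv w ≫ ι) ≫ (g ≫ u⟦(1 : ℤ)⟧') := by rw [Category.assoc]
        _ = 0 := by rw [hgu, comp_zero]
    exact ((shiftFunctor C (1 : ℤ)).map_eq_zero_iff).1 h2
  have hv_iso_imp : IsIso v → u = 0 := by
    intro hiso
    calc u = u ≫ (v ≫ inv v) := by rw [IsIso.hom_inv_id, Category.comp_id]
      _ = ((u ≫ f) ≫ ρ) ≫ inv v := by simp [v, Category.assoc]
      _ = 0 := by rw [huf, zero_comp, zero_comp]
  have hv_noiso : ¬ IsIso v := fun h => hu (hv_iso_imp h)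
  have hw_noiso : ¬ IsIso w := fun h => hu (hw_iso_imp h)
  have hw_ne : w ≠ 0 := by
    intro h0
    obtain ⟨t, ht⟩ := Triangle.coyoneda_exact₃ _ hT ι h0
    have ht' : ι = t ≫ f := ht
    have htv : t ≫ v = 𝟙 Z := by
      rw [show t ≫ v = (t ≫ f) ≫ ρ from (Category.assoc t f ρ).symm, ← ht', hιρ']
    have : IsIso t := isIso_of_splitMono_indec_aux t v htv hY hZ.1
    have hiv : IsIso (t ≫ v) := by rw [htv]; infer_instance
    have : IsIso v := IsIso.of_isIso_comp_left t v
    exact hu (hv_iso_imp this)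
  have hv_ne : v ≠ 0 := by
    intro h0
    obtain ⟨s, hs⟩ := Triangle.yoneda_exact₃ _ hT ρ h0
    have hs' : ρ = g ≫ s := hs
    have hws : w ≫ s = 𝟙 Z := by
      rw [show w ≫ s = ι ≫ (g ≫ s) from Category.assoc ι g s, ← hs', hιρ']
    have : IsIso w :=
      isIso_of_splitMono_indec_aux w s hws (indec_shift_aux hX 1) hZ.1
    exact hu (hw_iso_imp this)
  let ψ : W ≅ Z' ⊞ Z := e ≪≫ biprod.braiding Z Z'
  refine ⟨Z', Z, f ≫ ψ.hom, ψ.inv ≫ g, ?_, hZ, ?_, ?_, ?_, ?_⟩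
  · refine isomorphic_distinguished _ hT _ ?_
    exact Triangle.isoMk _ _ (Iso.refl _) (Iso.refl _) ψ.symm ((Category.comp_id u).trans (Category.id_comp u).symm) (show (f ≫ ψ.hom) ≫ ψ.inv = 𝟙 Y ≫ f by simp) (show (ψ.inv ≫ g) ≫ (shiftFunctor C (1 : ℤ)).map (𝟙 X) = ψ.inv ≫ g by simp)
  · rw [show (f ≫ ψ.hom) ≫ biprod.snd = v by simp [ψ, v, ρ, biprod.braiding]]
    exact hv_ne
  · rw [show (f ≫ ψ.hom) ≫ biprod.snd = v by simp [ψ, v, ρ, biprod.braiding]]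
    exact hv_noiso
  · rw [show biprod.inr ≫ ψ.inv ≫ g = w by
      rw [show biprod.inr ≫ ψ.inv ≫ g = (biprod.inr ≫ ψ.inv) ≫ g from (Category.assoc _ _ _).symm,
        show biprod.inr ≫ ψ.inv = ι by
          rw [show biprod.inr ≫ ψ.inv = (biprod.inr ≫ (biprod.braiding Z Z').inv) ≫ e.inv by
            simp [ψ], show biprod.inr ≫ (biprod.braiding Z Z').inv = biprod.inl by
              apply biprod.hom_ext <;> simp [biprod.braiding], ← he]
          simp]]
    exact hw_ne
  · rw [show biprod.inr ≫ ψ.inv ≫ g = w by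
      rw [show biprod.inr ≫ ψ.inv ≫ g = (biprod.inr ≫ ψ.inv) ≫ g from (Category.assoc _ _ _).symm,
        show biprod.inr ≫ ψ.inv = ι by
          rw [show biprod.inr ≫ ψ.inv = (biprod.inr ≫ (biprod.braiding Z Z').inv) ≫ e.inv by
            simp [ψ], show biprod.inr ≫ (biprod.braiding Z Z').inv = biprod.inl by
              apply biprod.hom_ext <;> simp [biprod.braiding], ← he]
          simp]]
    exact hw_noiso
end

section
/- Assume every object of D is a finite direct sum of indecomposable objects. Let u : X → Y be a nonzero non-invertible morphism between indecomposable objects. Then there is a distinguished triangle Y[-1] --(∗,v)ᵗ--> Z′ ⊕ Z --(∗,w)--> X --u--> Y such that Z is indecomposable, the component v : Y[-1] → Z is nonzero and non-invertible, and the component w : Z → X is nonzero and non-invertible. -/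
open CategoryTheory CategoryTheory.Limits CategoryTheory.Pretriangulated

universe v u

variable (C : Type u) [Category.{v} C] [Preadditive C] [HasZeroObject C]
  [HasShift C ℤ] [∀ n : ℤ, (shiftFunctor C n).Additive] [Pretriangulated C]
  [HasFiniteBiproducts C]

variable {C}

variable (C)

lemma aux_isZero_shift (X : C) (n : ℤ) (h : IsZero (X⟦n⟧)) : IsZero X :=
  IsZero.of_iso ((shiftFunctor C (-n)).map_isZero h)
    ((shiftFunctorCompIsoId C n (-n) (by omega)).app X).symm

lemma aux_indec_shift (X : C) (hX : Indec C X) (n : ℤ) : Indec C (X⟦n⟧) := by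
  constructor
  · exact fun h => hX.1 (aux_isZero_shift C X n h)
  · intro A B e
    haveI : PreservesBinaryBiproducts (shiftFunctor C (-n)) :=
      preservesBinaryBiproducts_of_preservesBiproducts _
    have e2 : X ≅ A⟦(-n : ℤ)⟧ ⊞ B⟦(-n : ℤ)⟧ :=
      ((shiftFunctorCompIsoId C n (-n) (by omega)).app X).symm ≪≫
        (shiftFunctor C (-n)).mapIso e ≪≫ (shiftFunctor C (-n)).mapBiprod A B
    rcases hX.2 _ _ e2 with h | h
    · exact Or.inl (aux_isZero_shift C A (-n) h)
    · exact Or.inr (aux_isZero_shift C B (-n) h)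

lemma aux_biprod_split {m : ℕ} (ZZ : Fin (m + 1) → C) (j : Fin (m + 1)) :
    ∃ (E : (⨁ ZZ) ≅ (⨁ fun k => ZZ (j.succAbove k)) ⊞ ZZ j),
      E.hom ≫ biprod.snd = biproduct.π ZZ j ∧ biprod.inr ≫ E.inv = biproduct.ι ZZ j := by
  refine ⟨⟨biprod.lift (biproduct.lift fun k => biproduct.π ZZ (j.succAbove k))
      (biproduct.π ZZ j),
    biprod.desc (biproduct.desc fun k => biproduct.ι ZZ (j.succAbove k))
      (biproduct.ι ZZ j), ?_, ?_⟩, by simp, by simp⟩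
  · rw [biprod.lift_desc, biproduct.lift_desc, ← biproduct.total,
      Fin.sum_univ_succAbove (fun l => biproduct.π ZZ l ≫ biproduct.ι ZZ l) j]
    exact add_comm _ _
  · apply biprod.hom_ext'
    · apply biprod.hom_ext
      · apply biproduct.hom_ext'
        intro k
        apply biproduct.hom_ext
        intro k'
        by_cases h : k = k'
        · subst h
          simp
        · simp [biproduct.ι_π_ne _ (fun hh => h (Fin.succAbove_right_injective hh)),
            biproduct.ι_π_ne _ h]
      · apply biproduct.hom_ext'
        intro k
        simp [biproduct.ι_π_ne _ (Fin.succAbove_ne j k)]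
    · apply biprod.hom_ext
      · apply biproduct.hom_ext
        intro k
        simp [biproduct.ι_π_ne _ (Fin.ne_succAbove j k)]
      · simp

/-- for a nonzero non-invertible `u : X ⟶ Y` between indecomposables there is a
distinguished triangle `Y⟦-1⟧ ⟶ Z' ⊞ Z ⟶ X ⟶ Y` (the last map being `u`, composed with the
canonical identification `Y ≅ (Y⟦-1⟧)⟦1⟧`) with `Z` indecomposable and the components
`v : Y⟦-1⟧ ⟶ Z` and `w : Z ⟶ X` nonzero and non-invertible. -/
theorem stmt_10 (hdec : EveryObjectDecomposes C) (X Y : C) (hX : Indec C X) (hY : Indec C Y)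
    (u : X ⟶ Y) (hu : u ≠ 0) (hui : ¬ IsIso u) :
    ∃ (Z' Z : C) (f : Y⟦(-1 : ℤ)⟧ ⟶ Z' ⊞ Z) (g : Z' ⊞ Z ⟶ X),
      (Triangle.mk f g
          (u ≫ (shiftFunctorCompIsoId C (-1 : ℤ) (1 : ℤ) (by omega)).inv.app Y) ∈
        distTriang C) ∧ Indec C Z ∧
      f ≫ biprod.snd ≠ 0 ∧ ¬ IsIso (f ≫ biprod.snd) ∧
      biprod.inr ≫ g ≠ 0 ∧ ¬ IsIso (biprod.inr ≫ g) := by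
  have hYs : Indec C (Y⟦(-1 : ℤ)⟧) := aux_indec_shift C Y hY (-1)
  set α : Y ⟶ (Y⟦(-1 : ℤ)⟧)⟦(1 : ℤ)⟧ :=
    (shiftFunctorCompIsoId C (-1 : ℤ) (1 : ℤ) (by omega)).inv.app Y with hα
  have hu' : u ≫ α ≠ 0 := by
    intro h
    apply hu
    have : u = (u ≫ α) ≫ inv α := by simp
    rw [this, h, zero_comp]
  obtain ⟨W, f0, g0, hT0⟩ := distinguished_cocone_triangle₂ (u ≫ α)
  obtain ⟨n, ZZ, hZZ, ⟨e⟩⟩ := hdec W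
  have hT' : Triangle.mk (f0 ≫ e.hom) (e.inv ≫ g0) (u ≫ α) ∈ distTriang C := by
    refine isomorphic_distinguished _ hT0 _ ?_
    exact Triangle.isoMk _ _ (Iso.refl _) e.symm (Iso.refl _) (by simp [Triangle.mk]) (by simp [Triangle.mk]) (by simp [Triangle.mk])
  set F : Y⟦(-1 : ℤ)⟧ ⟶ ⨁ ZZ := f0 ≫ e.hom with hF
  set G : (⨁ ZZ) ⟶ X := e.inv ≫ g0 with hG
  rcases n with _ | m
  · exfalso
    have hzero : IsZero (⨁ ZZ) := by
      rw [IsZero.iff_id_eq_zero]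
      apply biproduct.hom_ext
      intro j
      exact j.elim0
    have h3 : IsIso (u ≫ α) := (Triangle.isZero₂_iff_isIso₃ _ hT').1 hzero
    apply hui
    have : u = (u ≫ α) ≫ inv α := by simp
    rw [this]
    infer_instance
  · set v : ∀ j : Fin (m + 1), Y⟦(-1 : ℤ)⟧ ⟶ ZZ j :=
      fun j => F ≫ biproduct.π ZZ j with hv
    set w : ∀ j : Fin (m + 1), ZZ j ⟶ X := fun j => biproduct.ι ZZ j ≫ G with hw
    have hvni : ∀ j, ¬ IsIso (v j) := by
      intro j hj
      apply hu'
      have hsm : F ≫ (biproduct.π ZZ j ≫ inv (v j)) = 𝟙 _ := by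
        rw [← Category.assoc]
        exact IsIso.hom_inv_id (v j)
      have h31 := comp_distTriang_mor_zero₃₁ _ hT'
      dsimp [Triangle.mk] at h31
      have hmono : Mono (F⟦(1 : ℤ)⟧') := by
        have hrr : F⟦(1 : ℤ)⟧' ≫ (biproduct.π ZZ j ≫ inv (v j))⟦(1 : ℤ)⟧' = 𝟙 _ := by
          rw [← Functor.map_comp, hsm, CategoryTheory.Functor.map_id]
        haveI : IsSplitMono (F⟦(1 : ℤ)⟧') := IsSplitMono.mk' ⟨_, hrr⟩
        infer_instance
      exact (cancel_mono (F⟦(1 : ℤ)⟧')).1 (by rw [h31, zero_comp]; rfl)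
    have hwni : ∀ j, ¬ IsIso (w j) := by
      intro j hj
      apply hu'
      have h23 := comp_distTriang_mor_zero₂₃ _ hT'
      dsimp [Triangle.mk] at h23
      have hepi : Epi G := by
        have hrr : (inv (w j) ≫ biproduct.ι ZZ j) ≫ G = 𝟙 _ := by
          rw [Category.assoc]
          exact IsIso.inv_hom_id (w j)
        haveI : IsSplitEpi G := IsSplitEpi.mk' ⟨_, hrr⟩
        infer_instance
      exact (cancel_epi G).1 (by rw [h23, comp_zero]; rfl)
    have hw0 : ∀ j, w j ≠ 0 := by
      intro j hj
      obtain ⟨h₁, hh⟩ := Triangle.coyoneda_exact₂ _ hT' (biproduct.ι ZZ j) hj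
      change ZZ j ⟶ Y⟦(-1 : ℤ)⟧ at h₁
      have hh' : biproduct.ι ZZ j = h₁ ≫ F := hh
      have hsec : h₁ ≫ v j = 𝟙 (ZZ j) := by
        show h₁ ≫ (F ≫ biproduct.π ZZ j) = 𝟙 (ZZ j)
        rw [← Category.assoc, ← hh', biproduct.ι_π_self]
      obtain ⟨K, k, conn, hK⟩ := distinguished_cocone_triangle₁ (v j)
      have hconn : conn = 0 := by
        have h23 := comp_distTriang_mor_zero₂₃ _ hK
        dsimp [Triangle.mk] at h23
        calc conn = (h₁ ≫ v j) ≫ conn := by rw [hsec, Category.id_comp]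
        _ = h₁ ≫ (v j ≫ conn) := by rw [Category.assoc]
        _ = 0 := by rw [h23]; exact comp_zero
      obtain ⟨eK, -, -⟩ := exists_iso_binaryBiproduct_of_distTriang _ hK hconn
      rcases hYs.2 K (ZZ j) eK with hzK | hzZ
      · exact hvni j ((Triangle.isZero₁_iff_isIso₂ _ hK).1 hzK)
      · exact (hZZ j).1 hzZ
    have hvex : ∃ j, v j ≠ 0 := by
      by_contra hno
      push_neg at hno
      have hF0 : F = 0 := by
        apply biproduct.hom_ext
        intro j
        rw [zero_comp]
        exact hno j
      have hrot := rot_of_distTriang _ hT'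
      have hz3 : (Triangle.mk F G (u ≫ α)).rotate.mor₃ = 0 := by
        dsimp [Triangle.mk, Triangle.rotate]
        rw [hF0, Functor.map_zero, neg_zero]; rfl
      obtain ⟨eX, -, -⟩ := exists_iso_binaryBiproduct_of_distTriang _ hrot hz3
      rcases hX.2 _ _ eX with h1 | h2
      · apply (hZZ 0).1
        rw [IsZero.iff_id_eq_zero, ← biproduct.ι_π_self ZZ 0,
          (show IsZero (⨁ ZZ) from h1).eq_of_tgt (biproduct.ι ZZ 0) 0, zero_comp]
      · exact (aux_indec_shift C (Y⟦(-1 : ℤ)⟧) hYs 1).1 h2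
    obtain ⟨j, hvj⟩ := hvex
    obtain ⟨E, hE1, hE2⟩ := aux_biprod_split C ZZ j
    have key1 : (F ≫ E.hom) ≫ biprod.snd = v j := by rw [Category.assoc, hE1]
    have key2 : biprod.inr ≫ (E.inv ≫ G) = w j := by rw [← Category.assoc, hE2]
    refine ⟨⨁ (fun k => ZZ (j.succAbove k)), ZZ j, F ≫ E.hom, E.inv ≫ G, ?_, hZZ j,
      ?_, ?_, ?_, ?_⟩
    · refine isomorphic_distinguished _ hT' _ ?_
      exact Triangle.isoMk _ _ (Iso.refl _) E.symm (Iso.refl _) (by simp [Triangle.mk]) (by simp [Triangle.mk]) (by simp [Triangle.mk])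
    · rw [key1]; exact hvj
    · rw [key1]; exact hvni j
    · rw [key2]; exact hw0 j
    · rw [key2]; exact hwni j
end
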